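/- arXiv:2103.13271 — 7 statements merged into one kernel-verified Lean document; each statement's English description precedes it below -/
import Mathlib

section
/- For any positive integer n and indeterminates x_1,...,x_{n+1}, the multivariate Cayley formula holds: (x_1+...+x_{n+1})^{n-1} equals the sum over all labeled trees T on the vertex set {1,...,n+1} of the product over vertices v of x_v^{deg(v)-1}. -/
/-!
Grouping the trees by their degree sequences turns the formula into the multinomial theorem, once
we know that the trees on `V` in which every vertex `v` has degree `k v + 1` (where
`∑ k = |V| - 2`) are counted by the multinomial coefficient of `k`. That count is by induction
on `|V|`: some vertex `u` has `k u = 0`, i.e. is a leaf in all these trees, and deleting it is a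
bijection onto the pairs made of its neighbour `w` and a tree on `V \ {u}` in which `w` has lost
one degree. So the counts satisfy the Pascal recurrence `M(k) = ∑_{k w ≠ 0} M(k - e_w)` of
multinomial coefficients.
-/

open Finset
open scoped Nat

theorem Finset.sum_sub_single_add_one {α : Type*} [DecidableEq α] {s : Finset α} {f : α → ℕ}
    {i : α} (hi : i ∈ s) (hfi : f i ≠ 0) :
    ∑ j ∈ s, (f - Pi.single i 1 : α → ℕ) j + 1 = ∑ j ∈ s, f j := by
  have hg : ∀ j ∈ s.erase i, (f - Pi.single i 1 : α → ℕ) j = f j := fun j hj => by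
    simp [ne_of_mem_erase hj]
  rw [← add_sum_erase s _ hi, ← add_sum_erase s f hi, sum_congr rfl hg]
  simp only [Pi.sub_apply, Pi.single_eq_same]
  rw [add_right_comm, Nat.sub_add_cancel (Nat.one_le_iff_ne_zero.2 hfi)]

namespace Nat

theorem multinomial_eq_sum_multinomial_sub_single {α : Type*} [DecidableEq α] (s : Finset α)
    (f : α → ℕ) (hf : ∑ i ∈ s, f i ≠ 0) :
    multinomial s f = ∑ i ∈ s with f i ≠ 0, multinomial s (f - Pi.single i 1) := by
  refine Nat.eq_of_mul_eq_mul_left (prod_factorial_pos s f) ?_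
  have term : ∀ i ∈ s, f i ≠ 0 →
      (∏ j ∈ s, (f j)!) * multinomial s (f - Pi.single i 1) = f i * (∑ j ∈ s, f j - 1)! := by
    intro i hi hfi
    set g : α → ℕ := f - Pi.single i 1
    have hgi : f i = g i + 1 := by simp only [Pi.sub_apply, Pi.single_eq_same, g]; omega
    have hg : ∀ j ∈ s.erase i, f j = g j := fun j hj => by simp [g, ne_of_mem_erase hj]
    have hprod : ∏ j ∈ s, (f j)! = f i * ∏ j ∈ s, (g j)! := by
      rw [← mul_prod_erase s _ hi, ← mul_prod_erase s _ hi,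
        prod_congr rfl fun j hj => by rw [hg j hj], hgi, factorial_succ, mul_assoc]
    rw [hprod, mul_assoc, multinomial_spec, ← sum_sub_single_add_one hi hfi, add_tsub_cancel_right]
  rw [multinomial_spec, mul_sum,
    sum_congr rfl fun i hi => term i (mem_filter.1 hi).1 (mem_filter.1 hi).2, ← sum_mul,
    sum_filter_ne_zero, ← succ_pred_eq_of_ne_zero hf, factorial_succ, pred_eq_sub_one]
  rfl

theorem multinomial_subtype {α : Type*} [Fintype α] (p : α → Prop) [DecidablePred p]
    (f : α → ℕ) (hf : ∀ i, ¬ p i → f i = 0) :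
    multinomial univ (fun i : Subtype p => f i) = multinomial univ f := by
  have hsum : ∑ i : Subtype p, f i = ∑ i, f i := by
    rw [← sum_subtype (univ.filter p) (by simp),
      sum_filter_of_ne fun i _ hi => not_not.1 (mt (hf i) hi)]
  have hprod : ∏ i : Subtype p, (f i)! = ∏ i, (f i)! := by
    rw [← prod_subtype (univ.filter p) (by simp) (fun i => (f i)!),
      prod_filter_of_ne fun i _ hi => not_not.1 fun h => hi (by simp [hf i h])]
  simp only [multinomial, hsum, hprod]

end Nat

section ComplSingleton

variable {V : Type*} [Fintype V] [DecidableEq V]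

theorem Fintype.sum_eq_add_sum_compl_singleton {M : Type*} [AddCommMonoid M] (f : V → M)
    (u : V) : ∑ v, f v = f u + ∑ x : ({u}ᶜ : Set V), f x :=
  Fintype.sum_eq_add_sum_subtype_ne f u

theorem Fintype.card_compl_singleton_add_one (u : V) :
    Fintype.card ({u}ᶜ : Set V) + 1 = Fintype.card V := by
  have := Fintype.sum_eq_add_sum_compl_singleton (fun _ => 1) u
  simp only [sum_const, card_univ, smul_eq_mul, mul_one] at this
  omega

end ComplSingleton

namespace SimpleGraph

variable {V : Type*}

theorem ncard_neighborSet_eq_degree (G : SimpleGraph V) (v : V) [Fintype (G.neighborSet v)] :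
    (G.neighborSet v).ncard = G.degree v := by
  rw [← Nat.card_coe_set_eq, Nat.card_eq_fintype_card, card_neighborSet_eq_degree]

theorem Preconnected.ncard_neighborSet_pos [Finite V] [Nontrivial V] {G : SimpleGraph V}
    (hG : G.Preconnected) (v : V) : 0 < (G.neighborSet v).ncard := by
  have := Fintype.ofFinite V
  classical
  rw [ncard_neighborSet_eq_degree]
  exact hG.degree_pos_of_nontrivial v

theorem isTree_iff_connected_and_sum_ncard_neighborSet [Fintype V] {G : SimpleGraph V} :
    G.IsTree ↔ G.Connected ∧ ∑ v, (G.neighborSet v).ncard + 2 = 2 * Fintype.card V := by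
  classical
  have handshake := G.sum_degrees_eq_twice_card_edges
  simp only [← ncard_neighborSet_eq_degree] at handshake
  rw [isTree_iff_connected_and_card, Nat.card_eq_fintype_card, Nat.card_eq_fintype_card,
    ← edgeFinset_card, handshake]
  exact and_congr_right fun _ => by omega

theorem IsTree.sum_ncard_neighborSet_sub_one [Fintype V] [Nontrivial V] {G : SimpleGraph V}
    (hG : G.IsTree) : ∑ v, ((G.neighborSet v).ncard - 1) + 2 = Fintype.card V := by
  have hsum := (isTree_iff_connected_and_sum_ncard_neighborSet.1 hG).2
  have hsplit : ∑ v, ((G.neighborSet v).ncard - 1) + Fintype.card V =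
      ∑ v, (G.neighborSet v).ncard := by
    rw [Fintype.card_eq_sum_ones, ← sum_add_distrib]
    exact sum_congr rfl fun v _ => Nat.sub_add_cancel (hG.preconnected.ncard_neighborSet_pos v)
  omega

section AttachLeaf

def attachLeaf (u : V) (T : SimpleGraph ({u}ᶜ : Set V)) (w : ({u}ᶜ : Set V)) :
    SimpleGraph V :=
  T.map (Function.Embedding.subtype _) ⊔ edge u w

variable {u : V} {T : SimpleGraph ({u}ᶜ : Set V)} {w : ({u}ᶜ : Set V)}

theorem attachLeaf_adj {a b : V} :
    (attachLeaf u T w).Adj a b ↔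
      (∃ x y, T.Adj x y ∧ x.1 = a ∧ y.1 = b) ∨ (a = u ∧ b = w ∨ a = w ∧ b = u) := by
  have := w.2
  simp only [attachLeaf, sup_adj, map_adj, edge_adj, Function.Embedding.subtype_apply]
  grind

theorem neighborSet_attachLeaf_self : (attachLeaf u T w).neighborSet u = {(w : V)} := by
  have hw : (w : V) ≠ u := w.2
  ext v
  simp only [mem_neighborSet, attachLeaf_adj, Set.mem_singleton_iff]
  grind

theorem neighborSet_attachLeaf [DecidableEq V] (x : ({u}ᶜ : Set V)) :
    (attachLeaf u T w).neighborSet x =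
      Subtype.val '' T.neighborSet x ∪ if x = w then {u} else ∅ := by
  have hx : (x : V) ≠ u := x.2
  ext v
  simp only [mem_neighborSet, attachLeaf_adj, Set.mem_union, Set.mem_image]
  split_ifs <;> grind

theorem ncard_neighborSet_attachLeaf [Finite V] [DecidableEq V] (x : ({u}ᶜ : Set V)) :
    ((attachLeaf u T w).neighborSet x).ncard =
      (T.neighborSet x).ncard + if x = w then 1 else 0 := by
  have hu : u ∉ Subtype.val '' T.neighborSet x := fun ⟨y, _, hy⟩ => y.2 hy
  rw [neighborSet_attachLeaf]
  split_ifs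
  · rw [Set.union_singleton, Set.ncard_insert_of_notMem hu,
      Set.ncard_image_of_injective _ Subtype.val_injective]
  · rw [Set.union_empty, Set.ncard_image_of_injective _ Subtype.val_injective, add_zero]

theorem induce_attachLeaf : (attachLeaf u T w).induce {u}ᶜ = T := by
  ext x y
  have hx : (x : V) ≠ u := x.2
  have hy : (y : V) ≠ u := y.2
  simp [attachLeaf_adj, hx, hy]

theorem attachLeaf_induce {G : SimpleGraph V} (h : G.neighborSet u = {(w : V)}) :
    attachLeaf u (G.induce {u}ᶜ) w = G := by
  have hu : ∀ y, G.Adj u y ↔ y = w := fun y => by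
    rw [← mem_neighborSet, h, Set.mem_singleton_iff]
  ext x y
  simp only [attachLeaf_adj, comap_adj, Function.Embedding.subtype_apply, Subtype.exists]
  grind [G.adj_comm]

theorem attachLeaf_inj {T₁ T₂ : SimpleGraph ({u}ᶜ : Set V)} {w₁ w₂ : ({u}ᶜ : Set V)} :
    attachLeaf u T₁ w₁ = attachLeaf u T₂ w₂ ↔ T₁ = T₂ ∧ w₁ = w₂ := by
  refine ⟨fun h => ⟨?_, ?_⟩, fun h => h.1 ▸ h.2 ▸ rfl⟩
  · rw [← induce_attachLeaf (T := T₁) (w := w₁), h, induce_attachLeaf]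
  · simpa [neighborSet_attachLeaf_self, Subtype.ext_iff] using congrArg (·.neighborSet u) h

theorem connected_attachLeaf (hT : T.Connected) : (attachLeaf u T w).Connected := by
  have hadj : (attachLeaf u T w).Adj u w := attachLeaf_adj.2 (Or.inr (Or.inl ⟨rfl, rfl⟩))
  refine (connected_iff_exists_forall_reachable _).2 ⟨u, fun v => ?_⟩
  by_cases hv : v = u
  · rw [hv]
  · exact hadj.reachable.trans <| Reachable.mono le_sup_left <|
      (hT.preconnected w ⟨v, hv⟩).map (Embedding.map (Function.Embedding.subtype _) T).toHom

/-- Acyclicity is never checked on cycles: a connected graph with `|V| - 1` edges is a tree. -/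
theorem IsTree.attachLeaf [Fintype V] [DecidableEq V] (hT : T.IsTree) :
    (attachLeaf u T w).IsTree := by
  rw [isTree_iff_connected_and_sum_ncard_neighborSet] at hT ⊢
  refine ⟨connected_attachLeaf hT.1, ?_⟩
  have hcard := Fintype.card_compl_singleton_add_one u
  rw [Fintype.sum_eq_add_sum_compl_singleton _ u, neighborSet_attachLeaf_self,
    Set.ncard_singleton]
  simp only [ncard_neighborSet_attachLeaf, sum_add_distrib, sum_ite_eq', mem_univ, if_true]
  omega

theorem IsTree.induce_compl_singleton [Finite V] {G : SimpleGraph V} (hG : G.IsTree) {w : V}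
    (h : G.neighborSet u = {w}) : (G.induce {u}ᶜ).IsTree := by
  have := Fintype.ofFinite V
  classical
  refine ⟨hG.connected.induce_compl_singleton_of_degree_eq_one ?_, hG.isAcyclic.induce _⟩
  rw [← ncard_neighborSet_eq_degree, h, Set.ncard_singleton]

end AttachLeaf

section TreesWithDegrees

def treesWithDegrees (d : V → ℕ) : Set (SimpleGraph V) :=
  {T | T.IsTree ∧ ∀ v, (T.neighborSet v).ncard = d v}

variable {d : V → ℕ}

theorem card_treesWithDegrees_eq_zero [Finite V] [Nontrivial V] {v : V} (hv : d v = 0) :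
    Nat.card (treesWithDegrees d) = 0 :=
  Nat.card_eq_zero.2 <| .inl ⟨fun ⟨_, hT, hd⟩ =>
    (hT.preconnected.ncard_neighborSet_pos v).ne' ((hd v).trans hv)⟩

theorem card_treesWithDegrees_zero_of_subsingleton [Nonempty V] [Subsingleton V] :
    Nat.card (treesWithDegrees (0 : V → ℕ)) = 1 := by
  have : treesWithDegrees (0 : V → ℕ) = Set.univ := Set.eq_univ_of_forall fun T =>
    ⟨.of_subsingleton, fun v => by simp [Subsingleton.elim T ⊥]⟩
  rw [this, Nat.card_univ, Nat.card_unique]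

variable [Fintype V] [DecidableEq V] {u : V}

theorem attachLeaf_mem_treesWithDegrees {T : SimpleGraph ({u}ᶜ : Set V)}
    {w : ({u}ᶜ : Set V)} (hu : d u = 1) (hw : d w ≠ 0)
    (hT : T ∈ treesWithDegrees fun x : ({u}ᶜ : Set V) => d x - if x = w then 1 else 0) :
    attachLeaf u T w ∈ treesWithDegrees d := by
  refine ⟨hT.1.attachLeaf, fun v => ?_⟩
  by_cases hv : v = u
  · rw [hv, neighborSet_attachLeaf_self, Set.ncard_singleton, hu]
  · lift v to ({u}ᶜ : Set V) using hv
    rw [ncard_neighborSet_attachLeaf, hT.2 v]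
    dsimp only
    split_ifs with h
    · subst h; omega
    · omega

theorem exists_attachLeaf_eq {T : SimpleGraph V} (hT : T ∈ treesWithDegrees d) (hu : d u = 1) :
    ∃ w : ({u}ᶜ : Set V), ∃ T' ∈ treesWithDegrees fun x : ({u}ᶜ : Set V) =>
      d x - if x = w then 1 else 0, attachLeaf u T' w = T := by
  obtain ⟨w, hw⟩ := Set.ncard_eq_one.1 ((hT.2 u).trans hu)
  have hwu : w ≠ u := (show T.Adj u w by simp [← mem_neighborSet, hw]).ne'
  refine ⟨⟨w, hwu⟩, T.induce {u}ᶜ, ⟨hT.1.induce_compl_singleton hw, fun x => ?_⟩,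
    attachLeaf_induce hw⟩
  have := ncard_neighborSet_attachLeaf (T := T.induce {u}ᶜ) (w := ⟨w, hwu⟩) x
  rw [attachLeaf_induce hw, hT.2] at this
  dsimp only
  omega

theorem card_treesWithDegrees_eq_sum (hu : d u = 1) (hd : ∀ v, d v ≠ 0) :
    Nat.card (treesWithDegrees d) = ∑ w : ({u}ᶜ : Set V),
      Nat.card (treesWithDegrees fun x : ({u}ᶜ : Set V) => d x - if x = w then 1 else 0) := by
  let F : (Σ w : ({u}ᶜ : Set V), treesWithDegrees fun x : ({u}ᶜ : Set V) =>
      d x - if x = w then 1 else 0) → treesWithDegrees d :=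
    fun p => ⟨attachLeaf u p.2 p.1, attachLeaf_mem_treesWithDegrees hu (hd _) p.2.2⟩
  have hF : F.Bijective := by
    refine ⟨fun p q h => ?_, fun T => ?_⟩
    · obtain ⟨hT, hw⟩ := attachLeaf_inj.1 (congrArg Subtype.val h)
      exact Sigma.subtype_ext hw hT
    · obtain ⟨w, T', hT', hT⟩ := exists_attachLeaf_eq T.2 hu
      exact ⟨⟨w, T', hT'⟩, Subtype.ext hT⟩
  rw [← Nat.card_eq_of_bijective F hF, Nat.card_sigma]

theorem card_treesWithDegrees_one_of_card_eq_two (hV : Fintype.card V = 2) :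
    Nat.card (treesWithDegrees fun _ : V => 1) = 1 := by
  obtain ⟨u⟩ : Nonempty V := Fintype.card_pos_iff.1 (by omega)
  have : Unique ({u}ᶜ : Set V) := (Fintype.card_eq_one_iff_nonempty_unique.1 <| by
    have := Fintype.card_compl_singleton_add_one u; omega).some
  rw [card_treesWithDegrees_eq_sum (u := u) rfl (by simp), Fintype.sum_unique]
  have hd : (fun x : ({u}ᶜ : Set V) => 1 - if x = default then 1 else 0) = 0 :=
    funext fun x => by simp [Subsingleton.elim x default]
  rw [hd, card_treesWithDegrees_zero_of_subsingleton]

theorem card_treesWithDegrees_add_one (k : V → ℕ) (hk : ∑ v, k v + 2 = Fintype.card V) :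
    Nat.card (treesWithDegrees fun v => k v + 1) = Nat.multinomial univ k := by
  obtain ⟨m, hm⟩ : ∃ m, ∑ v, k v = m := ⟨_, rfl⟩
  induction m generalizing V with
  | zero =>
    have hk0 : k = 0 := funext <| by simpa using hm
    subst hk0
    simpa [Nat.multinomial] using card_treesWithDegrees_one_of_card_eq_two (by simpa using hk.symm)
  | succ m ih =>
    obtain ⟨u, -, hu⟩ := exists_lt_of_sum_lt (s := univ) (f := k) (g := fun _ => 1)
      (by simp only [sum_const, card_univ, smul_eq_mul, mul_one]; omega)
    replace hu : k u = 0 := Nat.lt_one_iff.1 hu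
    have hcard := Fintype.card_compl_singleton_add_one u
    have : Nontrivial ({u}ᶜ : Set V) := Fintype.one_lt_card_iff_nontrivial.1 (by omega)
    rw [card_treesWithDegrees_eq_sum (u := u) (by simp [hu]) (by simp),
      Nat.multinomial_eq_sum_multinomial_sub_single _ _ (by omega), sum_filter,
      Fintype.sum_eq_add_sum_compl_singleton _ u, if_neg (not_not.2 hu), zero_add]
    refine sum_congr rfl fun w _ => ?_
    split_ifs with hw
    · let k' : V → ℕ := k - Pi.single (w : V) 1
      have hk' : ∑ v, k' v + 1 = ∑ v, k v := sum_sub_single_add_one (mem_univ _) hw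
      have hd : (fun x : ({u}ᶜ : Set V) => k x + 1 - if x = w then 1 else 0) =
          fun x : ({u}ᶜ : Set V) => k' x + 1 := funext fun x => by
        by_cases hx : x = w
        · subst hx; simp only [k', Pi.sub_apply, Pi.single_eq_same, if_true]; omega
        · simp [k', hx, Subtype.val_injective.ne hx]
      have hk'u : k' u = 0 := by simp [k', hu]
      rw [Fintype.sum_eq_add_sum_compl_singleton _ u, hk'u, zero_add] at hk'
      rw [hd, ih (V := ({u}ᶜ : Set V)) (fun x => k' x) (by omega) (by omega),
        Nat.multinomial_subtype]
      exact fun v hv => by rwa [Set.mem_singleton_iff.1 (Set.notMem_compl_iff.1 hv)]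
    · exact card_treesWithDegrees_eq_zero (v := w) (by simp [not_not.1 hw])

end TreesWithDegrees

theorem card_isTree_ncard_neighborSet_sub_one_eq [Fintype V] [Nontrivial V] {k : V → ℕ}
    (hk : ∑ v, k v + 2 = Fintype.card V) :
    Nat.card {T : {G : SimpleGraph V // G.IsTree} // ∀ v, (T.1.neighborSet v).ncard - 1 = k v} =
      Nat.multinomial univ k := by
  classical
  rw [← card_treesWithDegrees_add_one k hk]
  refine Nat.card_congr <| (Equiv.subtypeSubtypeEquivSubtypeInter IsTree
    fun G => ∀ v, (G.neighborSet v).ncard - 1 = k v).trans <|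
    Equiv.subtypeEquivRight fun G => and_congr_right fun hG => forall_congr' fun v => ?_
  have := hG.preconnected.ncard_neighborSet_pos v
  dsimp only
  omega

open MvPolynomial in
open scoped Classical in
theorem sum_isTree_prod_X_pow [Fintype V] [DecidableEq V] [Nontrivial V] (R : Type*)
    [CommSemiring R] :
    ∑ T : {G : SimpleGraph V // G.IsTree},
        ∏ v, (X v : MvPolynomial V R) ^ ((T.1.neighborSet v).ncard - 1) =
      (∑ v, X v) ^ (Fintype.card V - 2) := by
  rw [sum_pow_eq_sum_piAntidiag, ← sum_fiberwise_of_maps_to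
    (g := fun T v => (T.1.neighborSet v).ncard - 1) (t := piAntidiag univ (Fintype.card V - 2))
    fun T _ => ?_]
  · refine sum_congr rfl fun k hk => ?_
    rw [sum_congr rfl fun T hT => prod_congr rfl fun v _ => by
        rw [congrFun (mem_filter.1 hT).2 v],
      sum_const, nsmul_eq_mul, ← Fintype.card_subtype, ← Nat.card_eq_fintype_card]
    simp only [funext_iff]
    rw [card_isTree_ncard_neighborSet_sub_one_eq <| by
      rw [(mem_piAntidiag.1 hk).1, Nat.sub_add_cancel Fintype.one_lt_card]]
  · have := T.2.sum_ncard_neighborSet_sub_one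
    simp only [mem_piAntidiag]
    exact ⟨by omega, fun v _ => mem_univ v⟩

end SimpleGraph

open MvPolynomial in
open scoped Classical in
theorem cayley_formula (n : ℕ) (hn : 0 < n) :
    (∑ i : Fin (n + 1), X i : MvPolynomial (Fin (n + 1)) ℚ) ^ (n - 1) =
      ∑ T : {G : SimpleGraph (Fin (n + 1)) // G.IsTree},
        ∏ v : Fin (n + 1), X v ^ ((T.1.neighborSet v).ncard - 1) := by
  have : Nontrivial (Fin (n + 1)) := Fin.nontrivial_iff_two_le.2 (by omega)
  rw [SimpleGraph.sum_isTree_prod_X_pow, Fintype.card_fin]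
  rfl
end

section
/- For any positive integer n and indeterminates x_1,...,x_{n+1}, the rooted Cayley formula holds: (x_1+...+x_{n+1})^{n} equals the sum over all rooted labeled trees T on vertex set {1,...,n+1} of x_{r}^{deg(r)} times the product over non-root vertices v of x_v^{deg(v)-1}, where r is the root of T. -/
/-!
Fix the root `r` and orient every edge towards it. A tree rooted at `r` becomes its parent map
`p`, with `p r = r` and every orbit ending at `r`, and the tree can be recovered from `p`.
Every vertex other than `r` has degree one more than its number of children, so the weight
`x_r ^ deg r * ∏_{v ≠ r} x_v ^ (deg v - 1)` is `∏_{u ≠ r} x_{p u}`.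

So the sum over trees with root `r` is the generating function `F(A, C)` of maps `A → C` whose
orbits all leave `A`, at `A = V \ {r}` and `C = V`. Sort these maps by the set `B` of points
sent straight out of `A`. What remains is such a map `A \ B → A`, so
`F(A, C) = ∑_{B ⊆ A} (∑_{C \ A} x) ^ |B| * F(A \ B, A)`, and strong induction on `A` gives
`(∑_C x) * F(A, C) = (∑_{C \ A} x) * (∑_C x) ^ |A|`. At `A = V \ {r}` the right-hand side
is `x_r * (∑ x) ^ n`; sum over `r` and cancel `∑ x`.
-/

open MvPolynomial Finset

lemma add_mul_sum_powerset_pow_mul_sum {ι R : Type*} [DecidableEq ι] [CommSemiring R]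
    (x : ι → R) (w s : R) (A : Finset ι) :
    (w + s) * ∑ B ∈ A.powerset, w ^ #B * (∑ v ∈ B, x v) * s ^ (#A - #B) =
      (∑ v ∈ A, x v) * w * (w + s) ^ #A := by
  induction A using Finset.induction_on with
  | empty => simp
  | insert a A ha ih =>
    have hcard : ∀ B ∈ A.powerset, #B ≤ #A := fun B hB => card_le_card (mem_powerset.1 hB)
    have hout : ∀ B ∈ A.powerset, w ^ #B * (∑ v ∈ B, x v) * s ^ (#(insert a A) - #B) =
        s * (w ^ #B * (∑ v ∈ B, x v) * s ^ (#A - #B)) := fun B hB => by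
      rw [card_insert_of_notMem ha, Nat.sub_add_comm (hcard B hB), pow_succ]; ring
    have hin : ∀ B ∈ A.powerset,
        w ^ #(insert a B) * (∑ v ∈ insert a B, x v) * s ^ (#(insert a A) - #(insert a B)) =
          w * (w ^ #B * (∑ v ∈ B, x v) * s ^ (#A - #B)) + x a * w * (w ^ #B * s ^ (#A - #B)) :=
        fun B hB => by
      have haB : a ∉ B := fun h => ha (mem_powerset.1 hB h)
      rw [card_insert_of_notMem ha, card_insert_of_notMem haB, sum_insert haB,
        Nat.add_sub_add_right, pow_succ]
      ring
    rw [sum_powerset_insert ha, sum_congr rfl hout, sum_congr rfl hin, sum_add_distrib,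
      ← mul_sum, ← mul_sum, ← mul_sum, sum_pow_mul_eq_add_pow, sum_insert ha,
      card_insert_of_notMem ha]
    set G := ∑ B ∈ A.powerset, w ^ #B * (∑ v ∈ B, x v) * s ^ (#A - #B)
    calc (w + s) * (s * G + (w * G + x a * w * (w + s) ^ #A))
        = (w + s) * ((w + s) * G) + x a * w * (w + s) ^ (#A + 1) := by ring
      _ = (x a + ∑ v ∈ A, x v) * w * (w + s) ^ (#A + 1) := by rw [ih]; ring

lemma sum_X_ne_zero {σ R : Type*} [CommSemiring R] [Nontrivial R] {A : Finset σ}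
    (hA : A.Nonempty) : ∑ v ∈ A, (X v : MvPolynomial σ R) ≠ 0 := by
  classical
  obtain ⟨a, ha⟩ := hA
  intro h
  simpa [coeff_sum, coeff_X, Finsupp.single_left_inj, ha] using
    congrArg (coeff (Finsupp.single a 1)) h

section Escapes

variable {V : Type*} {A B : Finset V} {p q : V → V}

def Escapes (p : V → V) (A : Finset V) : Prop := ∀ u ∈ A, ∃ k, p^[k] u ∉ A

lemma Escapes.mono (hp : Escapes p A) (hBA : B ⊆ A) : Escapes p B := fun u hu =>
  (hp u (hBA hu)).imp fun _ hk h => hk (hBA h)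

lemma Escapes.congr (hp : Escapes p A) (hpq : ∀ u ∈ A, p u = q u) : Escapes q A := by
  intro u hu
  obtain ⟨k, hk⟩ := hp u hu
  induction k generalizing u with
  | zero => exact absurd hu hk
  | succ k ih =>
    by_cases hpu : p u ∈ A
    · obtain ⟨j, hj⟩ := ih (p u) hpu hk
      exact ⟨j + 1, by rwa [Function.iterate_succ_apply, ← hpq u hu]⟩
    · exact ⟨1, by simpa [← hpq u hu]⟩

lemma Escapes.of_sdiff [DecidableEq V] (hp : Escapes p (A \ B)) (hB : ∀ u ∈ B, p u ∉ A) :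
    Escapes p A := by
  intro u hu
  by_cases huB : u ∈ B
  · exact ⟨1, hB u huB⟩
  obtain ⟨k, hk⟩ := hp u (mem_sdiff.2 ⟨hu, huB⟩)
  by_cases hkA : p^[k] u ∈ A
  · exact ⟨k + 1, by rw [Function.iterate_succ_apply']; exact hB _ (by simp_all)⟩
  · exact ⟨k, hkA⟩

end Escapes

section EscapingMaps

variable {V : Type*} [DecidableEq V] [Fintype V] {A B C D : Finset V} {p q f : V → V}

-- A map `B → D`, encoded as a self-map of `V` that fixes every point outside `B`.
def mapsInto (B D : Finset V) : Finset (V → V) :=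
  Fintype.piFinset fun u => if u ∈ B then D else {u}

lemma mem_mapsInto : f ∈ mapsInto B D ↔ (∀ u ∈ B, f u ∈ D) ∧ ∀ u ∉ B, f u = u := by
  simp only [mapsInto, Fintype.mem_piFinset]
  refine ⟨fun h => ⟨fun u hu => by simpa [hu] using h u, fun u hu => by simpa [hu] using h u⟩,
    fun h u => ?_⟩
  split_ifs with hu
  exacts [h.1 u hu, by simp [h.2 u hu]]

lemma sum_prod_mapsInto {R : Type*} [CommSemiring R] (B D : Finset V) (g : V → R) :
    ∑ f ∈ mapsInto B D, ∏ u ∈ B, g (f u) = (∑ v ∈ D, g v) ^ #B := by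
  calc ∑ f ∈ mapsInto B D, ∏ u ∈ B, g (f u)
      = ∑ f ∈ mapsInto B D, ∏ u, if u ∈ B then g (f u) else 1 := by
        simp only [prod_ite_mem, univ_inter]
    _ = ∏ u, ∑ v ∈ if u ∈ B then D else {u}, if u ∈ B then g v else 1 :=
        (prod_univ_sum (fun u => if u ∈ B then D else {u})
          fun u v => if u ∈ B then g v else 1).symm
    _ = ∏ u, if u ∈ B then ∑ v ∈ D, g v else 1 := by
        congr! 1 with u; split_ifs <;> simp
    _ = (∑ v ∈ D, g v) ^ #B := by rw [prod_ite_mem, univ_inter, prod_const]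

open scoped Classical in
noncomputable def escapingMaps (A C : Finset V) : Finset (V → V) :=
  {p ∈ mapsInto A C | Escapes p A}

lemma mem_escapingMaps : p ∈ escapingMaps A C ↔ p ∈ mapsInto A C ∧ Escapes p A := by
  simp [escapingMaps]

lemma escapingMaps_empty (C : Finset V) : escapingMaps ∅ C = {id} := by
  ext p
  simp [mem_escapingMaps, mem_mapsInto, Escapes, funext_iff]

lemma escapingMaps_self (hA : A.Nonempty) : escapingMaps A A = ∅ := by
  refine eq_empty_of_forall_notMem fun p hp => ?_
  obtain ⟨hmaps, hesc⟩ := mem_escapingMaps.1 hp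
  obtain ⟨u, hu⟩ := hA
  obtain ⟨k, hk⟩ := hesc u hu
  exact hk (Set.MapsTo.iterate (f := p) (s := (A : Set V)) (mem_mapsInto.1 hmaps).1 k hu)

lemma piecewise_mem_escapingMaps (hAC : A ⊆ C) (hBA : B ⊆ A) (hf : f ∈ mapsInto B (C \ A))
    (hq : q ∈ escapingMaps (A \ B) A) :
    B.piecewise f q ∈ escapingMaps A C ∧ {u ∈ A | B.piecewise f q u ∉ A} = B := by
  rw [mem_mapsInto] at hf
  obtain ⟨hq, hqesc⟩ := mem_escapingMaps.1 hq
  rw [mem_mapsInto] at hq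
  have hexit : ∀ u ∈ B, B.piecewise f q u ∉ A := fun u hu => by
    simpa [hu] using (mem_sdiff.1 (hf.1 u hu)).2
  refine ⟨mem_escapingMaps.2 ⟨mem_mapsInto.2 ⟨fun u hu => ?_, fun u hu => ?_⟩, ?_⟩, ?_⟩
  · by_cases huB : u ∈ B
    · simpa [huB] using (mem_sdiff.1 (hf.1 u huB)).1
    · simpa [huB] using hAC (hq.1 u (mem_sdiff.2 ⟨hu, huB⟩))
  · have huB : u ∉ B := fun h => hu (hBA h)
    simpa [huB] using hq.2 u (by simp [hu])
  · refine Escapes.of_sdiff (hqesc.congr fun u hu => ?_) hexit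
    simp [(mem_sdiff.1 hu).2]
  · ext u
    simp only [mem_filter]
    refine ⟨fun ⟨hu, hpu⟩ => ?_, fun hu => ⟨hBA hu, hexit u hu⟩⟩
    by_contra huB
    exact hpu (by simpa [huB] using hq.1 u (mem_sdiff.2 ⟨hu, huB⟩))

lemma piecewise_id_mem_of_mem_escapingMaps (hp : p ∈ escapingMaps A C)
    (hB : {u ∈ A | p u ∉ A} = B) :
    B.piecewise p id ∈ mapsInto B (C \ A) ∧
      (A \ B).piecewise p id ∈ escapingMaps (A \ B) A := by
  obtain ⟨hp, hpesc⟩ := mem_escapingMaps.1 hp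
  rw [mem_mapsInto] at hp
  subst hB
  refine ⟨mem_mapsInto.2 ⟨fun u hu => ?_, fun u hu => by simp [hu]⟩,
    mem_escapingMaps.2 ⟨mem_mapsInto.2 ⟨fun u hu => ?_, fun u hu => by simp [hu]⟩, ?_⟩⟩
  · simp only [mem_filter] at hu
    simpa [hu] using hp.1 u hu.1
  · simp only [mem_sdiff, mem_filter, not_and, not_not] at hu
    simp [hu]
  · exact (hpesc.mono sdiff_subset).congr fun u hu => by simp [hu]

lemma sum_escapingMaps_filter_exits {R : Type*} [CommSemiring R] (g : V → R) (hAC : A ⊆ C)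
    (hBA : B ⊆ A) :
    ∑ p ∈ escapingMaps A C with {u ∈ A | p u ∉ A} = B, ∏ u ∈ A, g (p u) =
      (∑ v ∈ C \ A, g v) ^ #B * ∑ q ∈ escapingMaps (A \ B) A, ∏ u ∈ A \ B, g (q u) := by
  rw [← sum_prod_mapsInto, sum_mul_sum, ← sum_product']
  symm
  refine sum_nbij' (fun fq => B.piecewise fq.1 fq.2)
    (fun p => (B.piecewise p id, (A \ B).piecewise p id)) ?_ ?_ ?_ ?_ ?_
  · rintro ⟨f, q⟩ hfq
    obtain ⟨hf, hq⟩ := mem_product.1 hfq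
    simpa [mem_filter] using piecewise_mem_escapingMaps hAC hBA hf hq
  · intro p hp
    obtain ⟨hp, hB⟩ := mem_filter.1 hp
    simpa [mem_product] using piecewise_id_mem_of_mem_escapingMaps hp hB
  · rintro ⟨f, q⟩ hfq
    obtain ⟨hf, hq⟩ := mem_product.1 hfq
    have hf : ∀ u ∉ B, f u = u := (mem_mapsInto.1 hf).2
    have hq : ∀ u ∉ A \ B, q u = u := (mem_mapsInto.1 (mem_escapingMaps.1 hq).1).2
    ext u
    · by_cases hu : u ∈ B <;> simp [hu, hf]
    · by_cases hu : u ∈ A \ B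
      · simp [hu, (mem_sdiff.1 hu).2]
      · simp [hu, hq]
  · intro p hp
    have hp := (mem_mapsInto.1 (mem_escapingMaps.1 (mem_filter.1 hp).1).1).2
    ext u
    by_cases huB : u ∈ B
    · simp [huB]
    by_cases huA : u ∈ A <;> simp [huA, huB, hp]
  · rintro ⟨f, q⟩ -
    rw [← prod_sdiff hBA, mul_comm]
    congr 1 <;> refine prod_congr rfl fun u hu => ?_
    · simp [(mem_sdiff.1 hu).2]
    · simp [hu]

lemma sum_escapingMaps_eq_sum_powerset {R : Type*} [CommSemiring R] (g : V → R) (hAC : A ⊆ C) :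
    ∑ p ∈ escapingMaps A C, ∏ u ∈ A, g (p u) =
      ∑ B ∈ A.powerset,
        (∑ v ∈ C \ A, g v) ^ #B *
          ∑ q ∈ escapingMaps (A \ B) A, ∏ u ∈ A \ B, g (q u) := by
  refine (sum_fiberwise_of_maps_to (t := A.powerset) (g := fun p => {u ∈ A | p u ∉ A})
    (fun p _ => mem_powerset.2 (filter_subset _ _)) _).symm.trans ?_
  exact sum_congr rfl fun B hB => sum_escapingMaps_filter_exits g hAC (mem_powerset.1 hB)

-- The factor `∑ v ∈ C, X v` on the left makes the formula hold for `A = ∅` as well.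
theorem sum_X_mul_sum_escapingMaps {R : Type*} [CommRing R] [IsDomain R] (A C : Finset V)
    (hAC : A ⊆ C) :
    (∑ v ∈ C, X v) * ∑ p ∈ escapingMaps A C, ∏ u ∈ A, (X (p u) : MvPolynomial V R) =
      (∑ v ∈ C \ A, X v) * (∑ v ∈ C, X v) ^ #A := by
  induction A using Finset.strongInduction generalizing C with
  | H A ih =>
  rcases A.eq_empty_or_nonempty with rfl | hA
  · simp [escapingMaps_empty]
  rw [← sum_sdiff hAC, sum_escapingMaps_eq_sum_powerset _ hAC]
  set w := ∑ v ∈ C \ A, (X v : MvPolynomial V R)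
  set s := ∑ v ∈ A, (X v : MvPolynomial V R) with hs
  have hexits : ∀ B ∈ A.powerset,
      s * ∑ q ∈ escapingMaps (A \ B) A, ∏ u ∈ A \ B, X (q u) =
        (∑ v ∈ B, X v) * s ^ (#A - #B) := by
    intro B hB
    rw [mem_powerset] at hB
    rcases B.eq_empty_or_nonempty with rfl | hB'
    · simp [escapingMaps_self hA]
    · have := ih (A \ B) (sdiff_ssubset hB hB') A sdiff_subset
      rwa [Finset.sdiff_sdiff_eq_self hB, card_sdiff_of_subset hB] at this
  refine mul_left_cancel₀ (sum_X_ne_zero hA) ?_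
  calc s * ((w + s) * ∑ B ∈ A.powerset,
        w ^ #B * ∑ q ∈ escapingMaps (A \ B) A, ∏ u ∈ A \ B, X (q u))
      = (w + s) * ∑ B ∈ A.powerset, w ^ #B * (∑ v ∈ B, X v) * s ^ (#A - #B) := by
        rw [mul_left_comm, mul_sum]
        congr 1
        refine sum_congr rfl fun B hB => ?_
        rw [mul_assoc, ← hexits B hB]
        ring
    _ = s * (w * (w + s) ^ #A) := by
        rw [add_mul_sum_powerset_pow_mul_sum, ← hs]
        ring

end EscapingMaps

open SimpleGraph

def parentGraph {V : Type*} (p : V → V) (r : V) : SimpleGraph V :=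
  SimpleGraph.fromRel fun u v => u ≠ r ∧ p u = v

structure IsParentMap {V : Type*} (p : V → V) (r : V) : Prop where
  map_root : p r = r
  exists_iterate_eq_root : ∀ v, ∃ k, p^[k] v = r

namespace IsParentMap

variable {V : Type*} {p q : V → V} {r u v w : V}

lemma iterate_ne_self (hp : IsParentMap p r) (hv : v ≠ r) {m : ℕ} (hm : 0 < m) :
    p^[m] v ≠ v := by
  intro hper
  obtain ⟨k, hk⟩ := hp.exists_iterate_eq_root v
  obtain ⟨j, hj⟩ := Nat.exists_eq_add_of_le (Nat.le_mul_of_pos_left k hm)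
  have hroot : p^[m * k] v = r := by
    rw [hj, add_comm, Function.iterate_add_apply, hk, Function.iterate_fixed hp.map_root]
  exact hv ((Function.IsPeriodicPt.mul_const hper k).symm.trans hroot)

lemma apply_ne_self (hp : IsParentMap p r) (hv : v ≠ r) : p v ≠ v :=
  hp.iterate_ne_self hv one_pos

lemma apply_apply_ne_self (hp : IsParentMap p r) (hv : v ≠ r) : p (p v) ≠ v :=
  hp.iterate_ne_self hv two_pos

lemma parentGraph_adj (hp : IsParentMap p r) :
    (parentGraph p r).Adj u w ↔ (u ≠ r ∧ p u = w) ∨ (w ≠ r ∧ p w = u) := by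
  rw [parentGraph, fromRel_adj, and_iff_right_iff_imp]
  rintro (⟨hu, rfl⟩ | ⟨hw, rfl⟩)
  exacts [(hp.apply_ne_self hu).symm, hp.apply_ne_self hw]

lemma reachable_root (hp : IsParentMap p r) (v : V) : (parentGraph p r).Reachable v r := by
  obtain ⟨k, hk⟩ := hp.exists_iterate_eq_root v
  induction k generalizing v with
  | zero => exact hk ▸ .refl v
  | succ k ih =>
    by_cases hv : v = r
    · exact hv ▸ .refl v
    exact (hp.parentGraph_adj.2 (.inl ⟨hv, rfl⟩)).reachable.trans (ih (p v) hk)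

lemma parentGraph_isTree [Finite V] (hp : IsParentMap p r) : (parentGraph p r).IsTree := by
  have : Nonempty V := ⟨r⟩
  rw [isTree_iff_connected_and_card]
  refine ⟨⟨fun u v => (hp.reachable_root u).trans (hp.reachable_root v).symm⟩, ?_⟩
  have hedges : (parentGraph p r).edgeSet = (fun v => s(v, p v)) '' {r}ᶜ := by
    ext e
    induction e using Sym2.ind with
    | h u w =>
      simp only [mem_edgeSet, hp.parentGraph_adj, Set.mem_image, Set.mem_compl_singleton_iff,
        Sym2.eq_iff]
      grind
  have hinj : Set.InjOn (fun v => s(v, p v)) {r}ᶜ := by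
    intro u hu v hv huv
    rcases Sym2.eq_iff.1 huv with ⟨h, -⟩ | ⟨rfl, h⟩
    exacts [h, absurd h (hp.apply_apply_ne_self hv)]
  rw [Nat.card_coe_set_eq, hedges, hinj.ncard_image, ← Set.ncard_compl_add_ncard {r},
    Set.ncard_singleton]

lemma eq_of_parentGraph_eq (hp : IsParentMap p r) (hq : IsParentMap q r)
    (h : parentGraph p r = parentGraph q r) : p = q := by
  funext v
  obtain ⟨k, hk⟩ := hq.exists_iterate_eq_root v
  induction k generalizing v with
  | zero => rw [show v = r from hk, hp.map_root, hq.map_root]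
  | succ k ih =>
    by_cases hv : v = r
    · rw [hv, hp.map_root, hq.map_root]
    have hadj : (parentGraph p r).Adj v (q v) := h ▸ hq.parentGraph_adj.2 (.inl ⟨hv, rfl⟩)
    rcases hp.parentGraph_adj.1 hadj with ⟨-, hpv⟩ | ⟨-, hpqv⟩
    · exact hpv
    · exact absurd ((ih (q v) hk).symm.trans hpqv) (hq.apply_apply_ne_self hv)

variable [Fintype V] [DecidableEq V]

lemma ncard_neighborSet (hp : IsParentMap p r) (v : V) :
    ((parentGraph p r).neighborSet v).ncard =
      #{u ∈ univ.erase r | p u = v} + if v = r then 0 else 1 := by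
  split_ifs with hv
  · subst hv
    rw [add_zero, ← Set.ncard_coe_finset]
    congr 1
    ext w
    simp [hp.parentGraph_adj]
  · have hpv : p v ∉ ({u ∈ univ.erase r | p u = v} : Finset V) := by
      simpa using fun _ => hp.apply_apply_ne_self hv
    rw [← card_insert_of_notMem hpv, ← Set.ncard_coe_finset]
    congr 1
    ext w
    simp only [mem_neighborSet, hp.parentGraph_adj, coe_insert, coe_filter, mem_erase,
      mem_univ, Set.mem_insert_iff, Set.mem_ofPred_eq]
    grind

lemma prod_pow_ncard_neighborSet {M : Type*} [CommMonoid M] (hp : IsParentMap p r) (g : V → M) :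
    g r ^ ((parentGraph p r).neighborSet r).ncard *
        ∏ v ∈ univ.erase r, g v ^ (((parentGraph p r).neighborSet v).ncard - 1) =
      ∏ u ∈ univ.erase r, g (p u) := by
  have hdeg : ∏ v ∈ univ.erase r, g v ^ (((parentGraph p r).neighborSet v).ncard - 1) =
      ∏ v ∈ univ.erase r, g v ^ #{u ∈ univ.erase r | p u = v} :=
    prod_congr rfl fun v hv => by simp [hp.ncard_neighborSet, ne_of_mem_erase hv]
  rw [hdeg, hp.ncard_neighborSet, if_pos rfl, add_zero,
    mul_prod_erase univ (fun v => g v ^ #{u ∈ univ.erase r | p u = v}) (mem_univ r),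
    ← prod_fiberwise_of_maps_to (s := univ.erase r) (t := univ) (g := p) fun _ _ => mem_univ _]
  refine prod_congr rfl fun v _ => ?_
  rw [prod_congr rfl fun u hu => by rw [(mem_filter.1 hu).2], prod_const]

end IsParentMap

namespace SimpleGraph.IsTree

variable {V : Type*} {G : SimpleGraph V} (hT : G.IsTree) (r : V)

noncomputable def pathTo (v : V) : G.Walk v r := (hT.existsUnique_path v r).exists.choose

lemma isPath_pathTo (v : V) : (hT.pathTo r v).IsPath :=
  (hT.existsUnique_path v r).exists.choose_spec

lemma eq_pathTo {v : V} {P : G.Walk v r} (hP : P.IsPath) : P = hT.pathTo r v :=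
  (hT.existsUnique_path v r).unique hP (hT.isPath_pathTo r v)

noncomputable def parent (v : V) : V := (hT.pathTo r v).snd

lemma pathTo_parent (v : V) : hT.pathTo r (hT.parent r v) = (hT.pathTo r v).tail :=
  (hT.eq_pathTo r (hT.isPath_pathTo r v).tail).symm

lemma isParentMap_parent : IsParentMap (hT.parent r) r where
  map_root := by rw [parent, ← hT.eq_pathTo r Walk.IsPath.nil]; rfl
  exists_iterate_eq_root v := by
    obtain ⟨n, hn⟩ : ∃ n, (hT.pathTo r v).length = n := ⟨_, rfl⟩
    induction n generalizing v with
    | zero => exact ⟨0, Walk.eq_of_length_eq_zero hn⟩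
    | succ n ih =>
      have hnil : ¬(hT.pathTo r v).Nil := by simp [← Walk.length_eq_zero_iff, hn]
      obtain ⟨k, hk⟩ := ih (hT.parent r v)
        (by rw [pathTo_parent]
            exact Nat.add_right_cancel ((Walk.length_tail_add_one hnil).trans hn))
      exact ⟨k + 1, hk⟩

lemma parentGraph_parent : parentGraph (hT.parent r) r = G := by
  have hp := hT.isParentMap_parent r
  ext u w
  rw [hp.parentGraph_adj]
  constructor
  · rintro (⟨hu, rfl⟩ | ⟨hw, rfl⟩)
    exacts [Walk.adj_snd (Walk.not_nil_of_ne hu), (Walk.adj_snd (Walk.not_nil_of_ne hw)).symm]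
  intro h
  by_cases hw : w ∈ (hT.pathTo r u).support
  · have hpu : hT.parent r u = w :=
      (hT.isAcyclic.eq_snd_of_adj_start (hT.isPath_pathTo r u) h hw).symm
    refine .inl ⟨fun hu => h.ne ?_, hpu⟩
    rw [← hpu, hu, hp.map_root]
  · refine .inr ⟨fun hwr => hw (hwr ▸ Walk.end_mem_support _), ?_⟩
    rw [parent, ← hT.eq_pathTo r ((hT.isPath_pathTo r u).cons hw (h := h.symm)), Walk.snd_cons]

end SimpleGraph.IsTree

section RootedTrees

variable {V : Type*} [Fintype V] [DecidableEq V]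

lemma mem_escapingMaps_erase_univ {p : V → V} {r : V} :
    p ∈ escapingMaps (univ.erase r) univ ↔ IsParentMap p r := by
  simp only [mem_escapingMaps, mem_mapsInto, Escapes, mem_erase, mem_univ, and_true, ne_eq,
    not_not, forall_eq, imp_true_iff, true_and]
  refine ⟨fun ⟨hr, hp⟩ => ⟨hr, fun v => ?_⟩,
    fun hp => ⟨hp.map_root, fun v _ => hp.exists_iterate_eq_root v⟩⟩
  by_cases hv : v = r
  exacts [⟨0, hv⟩, hp v hv]

theorem sum_isTree_eq_sum_escapingMaps [Fintype {G : SimpleGraph V // G.IsTree}]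
    {R : Type*} [CommSemiring R] (g : V → R) (r : V) :
    ∑ T : {G : SimpleGraph V // G.IsTree},
        g r ^ (T.1.neighborSet r).ncard *
          ∏ v ∈ univ.erase r, g v ^ ((T.1.neighborSet v).ncard - 1) =
      ∑ p ∈ escapingMaps (univ.erase r) univ, ∏ u ∈ univ.erase r, g (p u) := by
  symm
  refine sum_bij
    (fun p hp => ⟨parentGraph p r, (mem_escapingMaps_erase_univ.1 hp).parentGraph_isTree⟩)
    (fun _ _ => mem_univ _) (fun p hp q hq h => ?_) (fun T _ => ?_) (fun p hp => ?_)
  · exact (mem_escapingMaps_erase_univ.1 hp).eq_of_parentGraph_eq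
      (mem_escapingMaps_erase_univ.1 hq) (congrArg Subtype.val h)
  · exact ⟨T.2.parent r, mem_escapingMaps_erase_univ.2 (T.2.isParentMap_parent r),
      Subtype.ext (T.2.parentGraph_parent r)⟩
  · exact ((mem_escapingMaps_erase_univ.1 hp).prod_pow_ncard_neighborSet g).symm

end RootedTrees

open scoped Classical in
theorem rooted_cayley_formula_general (n : ℕ) :
    (∑ i : Fin (n + 1), X i : MvPolynomial (Fin (n + 1)) ℚ) ^ n =
      ∑ T : {G : SimpleGraph (Fin (n + 1)) // G.IsTree},
        ∑ r : Fin (n + 1),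
          X r ^ (T.1.neighborSet r).ncard *
            ∏ v ∈ Finset.univ.erase r, X v ^ ((T.1.neighborSet v).ncard - 1) := by
  rw [sum_comm]
  simp_rw [sum_isTree_eq_sum_escapingMaps]
  refine mul_left_cancel₀ (sum_X_ne_zero univ_nonempty) ?_
  rw [mul_sum]
  simp_rw [sum_X_mul_sum_escapingMaps _ _ (erase_subset _ _), sdiff_erase_self (mem_univ _),
    sum_singleton, card_erase_of_mem (mem_univ _), card_univ, Fintype.card_fin,
    Nat.add_sub_cancel]
  rw [← sum_mul]

open scoped Classical in
theorem rooted_cayley_formula (n : ℕ) (hn : 0 < n) :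
    (∑ i : Fin (n + 1), X i : MvPolynomial (Fin (n + 1)) ℚ) ^ n =
      ∑ T : {G : SimpleGraph (Fin (n + 1)) // G.IsTree},
        ∑ r : Fin (n + 1),
          X r ^ (T.1.neighborSet r).ncard *
            ∏ v ∈ Finset.univ.erase r, X v ^ ((T.1.neighborSet v).ncard - 1) :=
  rooted_cayley_formula_general n
end

section
/- For any positive integer n and indeterminates x_1,...,x_n, one has (1 + x_1 + ... + x_n)^{n-1} = sum over all set partitions π of {1,...,n} of the product over blocks B of π of (sum_{b in B} x_b)^{|B|-1}. -/
open MvPolynomial Finset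

/-- `P` is a set partition of the finset `S`: its parts are nonempty, pairwise
disjoint, and their union is `S`. -/
abbrev IsSetPartition {α : Type*} [DecidableEq α] (S : Finset α)
    (P : Finset (Finset α)) : Prop :=
  (∀ B ∈ P, B.Nonempty) ∧ (∀ B ∈ P, ∀ B' ∈ P, B ≠ B' → Disjoint B B') ∧
    P.sup id = S

/-- The finset of all set partitions of a finset `S` in a finite type. -/
def partitionsOf {α : Type*} [Fintype α] [DecidableEq α] (S : Finset α) :
    Finset (Finset (Finset α)) :=
  Finset.univ.filter (IsSetPartition S)

/-!
Classifying the partitions of `S` by the block `insert s A` that contains a fixed `s ∈ S`, and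
applying induction to the partitions of the rest `S \ insert s A`, reduces the identity to
Hurwitz's identity
`∑ A ⊆ T, (x + z_A) ^ |A| * (1 + z_{T \ A}) ^ (|T \ A| - 1) = (1 + x + z_T) ^ |T|`
with `T = S \ {s}` and `x = x_s`. Hurwitz's identity is proved by induction on `T`, as an identity
of polynomials in `x`: by the induction hypothesis, applied over `R[X]`, both sides have the same
derivative, and both vanish at `x = -1 - z_T`, where the left side becomes an alternating sum over
subsets, i.e. an iterated finite difference of order `|T|` of a polynomial of degree `|T| - 1`.
-/

open scoped Polynomial

instance Polynomial.instIsAddTorsionFree {R : Type*} [Semiring R] [IsAddTorsionFree R] :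
    IsAddTorsionFree R[X] where
  nsmul_right_injective _ hn p q h := Polynomial.ext fun i =>
    nsmul_right_injective hn (by simpa using congrArg (Polynomial.coeff · i) h)

section FiniteDifference

variable {ι R : Type*} [DecidableEq ι] [CommRing R]

theorem add_pow_sub_pow_eq_sum_range (x y : R) (k : ℕ) :
    (x + y) ^ k - x ^ k = ∑ j ∈ range k, x ^ j * y ^ (k - j) * k.choose j := by
  rw [add_pow, sum_range_succ, Nat.sub_self, pow_zero, Nat.choose_self, Nat.cast_one, mul_one,
    mul_one, add_sub_cancel_right]

theorem sum_powerset_neg_one_pow_mul_add_sum_pow_eq_zero (z : ι → R) (w : R) (S : Finset ι)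
    {k : ℕ} (hk : k < #S) :
    ∑ A ∈ S.powerset, (-1) ^ #(S \ A) * (w + ∑ i ∈ A, z i) ^ k = 0 := by
  induction S using Finset.induction_on generalizing k with
  | empty => simp at hk
  | @insert s T hs ih =>
    have hterm : ∀ A ∈ T.powerset,
        (-1) ^ #(insert s T \ A) * (w + ∑ i ∈ A, z i) ^ k +
          (-1) ^ #(insert s T \ insert s A) * (w + ∑ i ∈ insert s A, z i) ^ k =
          ∑ j ∈ range k,
            z s ^ (k - j) * k.choose j * ((-1) ^ #(T \ A) * (w + ∑ i ∈ A, z i) ^ j) := by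
      intro A hA
      have hsA : s ∉ A := fun h => hs (mem_powerset.mp hA h)
      rw [insert_sdiff_of_notMem _ hsA, card_insert_of_notMem (by simp [hs]),
        insert_sdiff_insert, sdiff_insert_of_notMem hs, sum_insert hsA,
        show w + (z s + ∑ i ∈ A, z i) = (w + ∑ i ∈ A, z i) + z s by ring, pow_succ]
      calc _ = (-1) ^ #(T \ A) *
              ((w + ∑ i ∈ A, z i + z s) ^ k - (w + ∑ i ∈ A, z i) ^ k) := by
            ring
        _ = _ := by
            rw [add_pow_sub_pow_eq_sum_range, mul_sum]
            exact sum_congr rfl fun j _ => by ring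
    rw [sum_powerset_insert hs, ← sum_add_distrib, sum_congr rfl hterm, sum_comm]
    refine sum_eq_zero fun j hj => ?_
    have hjT : j < #T := by
      rw [card_insert_of_notMem hs] at hk
      exact (mem_range.mp hj).trans_le (Nat.lt_succ_iff.mp hk)
    rw [← mul_sum, ih hjT, mul_zero]

end FiniteDifference

theorem Finset.sum_powerset_sum_eq_sum_sum_powerset_erase {ι M : Type*} [DecidableEq ι]
    [AddCommMonoid M] (T : Finset ι) (f : Finset ι → ι → M) :
    ∑ A ∈ T.powerset, ∑ t ∈ A, f A t =
      ∑ t ∈ T, ∑ A ∈ (T.erase t).powerset, f (insert t A) t := by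
  rw [sum_comm' (t' := T) (s' := fun t => T.powerset.filter (t ∈ ·)) fun A t => by
    simp only [mem_powerset, mem_filter]
    exact ⟨fun h => ⟨h, h.1 h.2⟩, fun h => h.1⟩]
  refine sum_congr rfl fun t ht => ?_
  refine sum_nbij' (erase · t) (insert t) ?_ ?_ ?_ ?_ fun A hA => ?_
  · intro A hA
    simp only [mem_filter, mem_powerset] at hA ⊢
    exact erase_subset_erase t hA.1
  · intro A hA
    simp only [mem_filter, mem_powerset] at hA ⊢
    exact ⟨insert_subset ht (hA.trans (erase_subset t T)), mem_insert_self t A⟩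
  · intro A hA
    exact insert_erase (mem_filter.mp hA).2
  · intro A hA
    exact erase_insert fun h => notMem_erase t T (mem_powerset.mp hA h)
  · rw [insert_erase (mem_filter.mp hA).2]

namespace Polynomial

theorem eq_of_derivative_eq_of_eval_eq {R : Type*} [Ring R] [IsAddTorsionFree R]
    {p q : R[X]} (r : R) (hd : derivative p = derivative q) (he : p.eval r = q.eval r) :
    p = q := by
  have hc := eq_C_of_derivative_eq_zero (p := p - q) (by rw [map_sub, hd, sub_self])
  have hr := congrArg (eval r) hc
  rw [eval_sub, he, sub_self, eval_C] at hr
  rwa [← hr, map_zero, sub_eq_zero] at hc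

end Polynomial

section Hurwitz

variable {ι R : Type*} [DecidableEq ι] [CommRing R]

-- For `A = T` the truncated exponent `0 - 1 = 0` is harmless, the base being `1`.
def hurwitzSum (T : Finset ι) (z : ι → R) (x : R) : R :=
  ∑ A ∈ T.powerset, (x + ∑ i ∈ A, z i) ^ #A * (1 + ∑ i ∈ T \ A, z i) ^ (#(T \ A) - 1)

theorem map_hurwitzSum {S : Type*} [CommRing S] (f : R →+* S) (T : Finset ι) (z : ι → R)
    (x : R) :
    f (hurwitzSum T z x) = hurwitzSum T (fun i => f (z i)) (f x) := by
  simp [hurwitzSum]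

theorem eval_hurwitzSum (T : Finset ι) (z : ι → R) (x : R) :
    (hurwitzSum T (fun i => Polynomial.C (z i)) Polynomial.X).eval x = hurwitzSum T z x := by
  simpa using
    map_hurwitzSum (Polynomial.evalRingHom x) T (fun i => Polynomial.C (z i)) Polynomial.X

theorem hurwitzSum_neg_one_sub_sum {T : Finset ι} (hT : T.Nonempty) (z : ι → R) :
    hurwitzSum T z (-1 - ∑ i ∈ T, z i) = 0 := by
  have hterm : ∀ A ∈ T.powerset,
      (-1 - ∑ i ∈ T, z i + ∑ i ∈ A, z i) ^ #A * (1 + ∑ i ∈ T \ A, z i) ^ (#(T \ A) - 1) =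
        (-1) ^ #(T \ (T \ A)) * (1 + ∑ i ∈ T \ A, z i) ^ (#T - 1) := by
    intro A hA
    have hAT := mem_powerset.mp hA
    rw [Finset.sdiff_sdiff_eq_self hAT, ← sum_sdiff hAT,
      show -1 - (∑ i ∈ T \ A, z i + ∑ i ∈ A, z i) + ∑ i ∈ A, z i = -(1 + ∑ i ∈ T \ A, z i) by
        ring,
      neg_pow, mul_assoc, ← pow_add]
    rcases (T \ A).eq_empty_or_nonempty with hTA | hTA
    · simp [hTA]
    · congr 2
      have := card_sdiff_add_card_eq_card hAT
      have := hTA.card_pos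
      omega
  have hinv : ∀ A ∈ T.powerset, T \ (T \ A) = A := fun A hA =>
    Finset.sdiff_sdiff_eq_self (mem_powerset.mp hA)
  rw [hurwitzSum, sum_congr rfl hterm]
  exact (sum_nbij' (T \ ·) (T \ ·) (by simp) (by simp) hinv hinv fun _ _ => rfl).trans
    (sum_powerset_neg_one_pow_mul_add_sum_pow_eq_zero z 1 T (by have := hT.card_pos; omega))

theorem derivative_hurwitzSum (T : Finset ι) (z : ι → R) :
    Polynomial.derivative (hurwitzSum T (fun i => Polynomial.C (z i)) Polynomial.X) =
      ∑ t ∈ T, hurwitzSum (T.erase t) (fun i => Polynomial.C (z i))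
        (Polynomial.X + Polynomial.C (z t)) := by
  have hterm : ∀ A ∈ T.powerset, Polynomial.derivative
      ((Polynomial.X + ∑ i ∈ A, Polynomial.C (z i)) ^ #A *
        (1 + ∑ i ∈ T \ A, Polynomial.C (z i)) ^ (#(T \ A) - 1)) =
      ∑ t ∈ A, (Polynomial.X + ∑ i ∈ A, Polynomial.C (z i)) ^ (#A - 1) *
        (1 + ∑ i ∈ T \ A, Polynomial.C (z i)) ^ (#(T \ A) - 1) := by
    intro A _
    simp [Polynomial.derivative_pow, mul_assoc]
  rw [hurwitzSum, map_sum, sum_congr rfl hterm, sum_powerset_sum_eq_sum_sum_powerset_erase]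
  refine sum_congr rfl fun t ht => sum_congr rfl fun A hA => ?_
  have htA : t ∉ A := fun h => notMem_erase t T (mem_powerset.mp hA h)
  rw [sum_insert htA, card_insert_of_notMem htA, Nat.add_sub_cancel, sdiff_insert,
    ← erase_sdiff_comm, add_assoc]

theorem hurwitzSum_eq [IsAddTorsionFree R] (T : Finset ι) (z : ι → R) (x : R) :
    hurwitzSum T z x = (1 + x + ∑ i ∈ T, z i) ^ #T := by
  induction T using Finset.strongInduction generalizing R with
  | H T ih =>
  rcases T.eq_empty_or_nonempty with rfl | hT
  · simp [hurwitzSum]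
  suffices h : hurwitzSum T (fun i => Polynomial.C (z i)) Polynomial.X =
      (1 + Polynomial.X + ∑ i ∈ T, Polynomial.C (z i)) ^ #T by
    simpa [eval_hurwitzSum, Polynomial.eval_finsetSum] using congrArg (Polynomial.eval x) h
  refine Polynomial.eq_of_derivative_eq_of_eval_eq (-1 - ∑ i ∈ T, z i) ?_ ?_
  · have hterm : ∀ t ∈ T, hurwitzSum (T.erase t) (fun i => Polynomial.C (z i))
        (Polynomial.X + Polynomial.C (z t)) =
          (1 + Polynomial.X + ∑ i ∈ T, Polynomial.C (z i)) ^ (#T - 1) := by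
      intro t ht
      rw [ih _ (erase_ssubset ht), card_erase_of_mem ht, ← add_sum_erase T _ ht]
      ring
    rw [derivative_hurwitzSum, sum_congr rfl hterm, sum_const]
    simp [Polynomial.derivative_pow]
  · rw [eval_hurwitzSum, hurwitzSum_neg_one_sub_sum hT]
    simp only [Polynomial.eval_pow, Polynomial.eval_add, Polynomial.eval_one, Polynomial.eval_X,
      Polynomial.eval_finsetSum, Polynomial.eval_C]
    rw [show 1 + (-1 - ∑ i ∈ T, z i) + ∑ i ∈ T, z i = 0 by ring, zero_pow hT.card_pos.ne']

end Hurwitz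

section SetPartition

variable {ι : Type*} [DecidableEq ι] {S B : Finset ι} {P : Finset (Finset ι)}

theorem IsSetPartition.subset (hP : IsSetPartition S P) (hB : B ∈ P) : B ⊆ S :=
  hP.2.2 ▸ le_sup (f := id) hB

theorem IsSetPartition.eq_of_mem_of_mem (hP : IsSetPartition S P) {B' : Finset ι} (hB : B ∈ P)
    (hB' : B' ∈ P) {a : ι} (ha : a ∈ B) (ha' : a ∈ B') : B = B' := by
  by_contra hne
  exact disjoint_left.mp (hP.2.1 B hB B' hB' hne) ha ha'

theorem IsSetPartition.notMem_of_sdiff (hB : B.Nonempty) (hP : IsSetPartition (S \ B) P) :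
    B ∉ P := fun hBP =>
  let ⟨_, ha⟩ := hB
  (mem_sdiff.mp (hP.subset hBP ha)).2 ha

theorem IsSetPartition.insert (hB : B.Nonempty) (hBS : B ⊆ S) (hP : IsSetPartition (S \ B) P) :
    IsSetPartition S (insert B P) := by
  have hdisj : ∀ B' ∈ P, Disjoint B B' := fun B' hB' =>
    disjoint_right.mpr fun _ ha => (mem_sdiff.mp (hP.subset hB' ha)).2
  refine ⟨?_, ?_, ?_⟩
  · simpa only [forall_mem_insert] using ⟨hB, hP.1⟩
  · simp only [mem_insert]
    rintro B₁ (rfl | hB₁) B₂ (rfl | hB₂) hne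
    exacts [absurd rfl hne, hdisj B₂ hB₂, (hdisj B₁ hB₁).symm, hP.2.1 B₁ hB₁ B₂ hB₂ hne]
  · rw [sup_insert, hP.2.2, id, sup_eq_union, union_sdiff_of_subset hBS]

theorem IsSetPartition.erase (hP : IsSetPartition S P) (hB : B ∈ P) :
    IsSetPartition (S \ B) (P.erase B) := by
  refine ⟨fun B' hB' => hP.1 B' (mem_of_mem_erase hB'), fun B₁ hB₁ B₂ hB₂ =>
    hP.2.1 B₁ (mem_of_mem_erase hB₁) B₂ (mem_of_mem_erase hB₂), ?_⟩
  have hdisj : Disjoint B ((P.erase B).sup id) := Finset.disjoint_sup_right.mpr fun B' hB' =>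
    hP.2.1 B hB B' (mem_of_mem_erase hB') (ne_of_mem_erase hB').symm
  rw [← hP.2.2, ← insert_erase hB, sup_insert, erase_insert (notMem_erase B P), id,
    sup_eq_union, union_sdiff_cancel_left hdisj]

theorem isSetPartition_empty_iff : IsSetPartition ∅ P ↔ P = ∅ := by
  refine ⟨fun hP => eq_empty_of_forall_notMem fun B hB => ?_, ?_⟩
  · exact (hP.1 B hB).ne_empty (subset_empty.mp (hP.subset hB))
  · rintro rfl
    exact ⟨fun _ => False.elim ∘ notMem_empty _, fun _ => False.elim ∘ notMem_empty _, sup_empty⟩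

variable [Fintype ι]

theorem mem_partitionsOf : P ∈ partitionsOf S ↔ IsSetPartition S P :=
  mem_filter.trans (and_iff_right (mem_univ P))

theorem partitionsOf_empty : partitionsOf (∅ : Finset ι) = {∅} := by
  ext P
  rw [mem_partitionsOf, isSetPartition_empty_iff, mem_singleton]

theorem sum_partitionsOf_insert {M : Type*} [CommSemiring M] (g : Finset ι → M) {s : ι}
    {T : Finset ι} (hs : s ∉ T) :
    ∑ P ∈ partitionsOf (insert s T), ∏ B ∈ P, g B =
      ∑ A ∈ T.powerset, g (insert s A) * ∑ Q ∈ partitionsOf (T \ A), ∏ B ∈ Q, g B := by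
  have hsdiff : ∀ A, insert s T \ insert s A = T \ A := fun A => by
    rw [insert_sdiff_insert, sdiff_insert_of_notMem hs]
  have hrest : ∀ A, ∀ Q ∈ partitionsOf (T \ A), IsSetPartition (insert s T \ insert s A) Q :=
    fun A Q hQ => hsdiff A ▸ mem_partitionsOf.mp hQ
  have hpart : ∀ A ∈ T.powerset, ∀ Q ∈ partitionsOf (T \ A),
      IsSetPartition (insert s T) (insert (insert s A) Q) := fun A hA Q hQ =>
    .insert (insert_nonempty s A) (insert_subset_insert s (mem_powerset.mp hA)) (hrest A Q hQ)
  have hnotMem : ∀ A, ∀ Q ∈ partitionsOf (T \ A), insert s A ∉ Q := fun A Q hQ =>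
    (hrest A Q hQ).notMem_of_sdiff (insert_nonempty s A)
  have hsA : ∀ A ∈ T.powerset, s ∉ A := fun A hA h => hs (mem_powerset.mp hA h)
  simp_rw [mul_sum]
  rw [sum_sigma']
  symm
  refine sum_bij (fun p _ => insert (insert s p.1) p.2) ?_ ?_ ?_ ?_
  · rintro ⟨A, Q⟩ h
    rw [mem_sigma] at h
    exact mem_partitionsOf.mpr (hpart A h.1 Q h.2)
  · rintro ⟨A, Q⟩ h ⟨A', Q'⟩ h' heq
    rw [mem_sigma] at h h'
    have hA : insert s A = insert s A' :=
      (hpart A h.1 Q h.2).eq_of_mem_of_mem (mem_insert_self _ _) (heq ▸ mem_insert_self _ _)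
        (mem_insert_self s A) (mem_insert_self s A')
    obtain rfl : A = A' := by
      rw [← erase_insert (hsA A h.1), hA, erase_insert (hsA A' h'.1)]
    obtain rfl : Q = Q' := by
      rw [← erase_insert (hnotMem A Q h.2), heq, erase_insert (hnotMem A Q' h'.2)]
    rfl
  · intro P hP
    rw [mem_partitionsOf] at hP
    obtain ⟨B, hBP, hsB : s ∈ B⟩ := mem_sup.mp (hP.2.2 ▸ mem_insert_self s T : s ∈ P.sup id)
    refine ⟨⟨B.erase s, P.erase B⟩, mem_sigma.mpr ⟨?_, ?_⟩, ?_⟩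
    · exact mem_powerset.mpr (erase_insert hs ▸ erase_subset_erase s (hP.subset hBP))
    · rw [mem_partitionsOf, ← hsdiff, insert_erase hsB]
      exact hP.erase hBP
    · dsimp only
      rw [insert_erase hsB, insert_erase hBP]
  · rintro ⟨A, Q⟩ h
    rw [mem_sigma] at h
    rw [prod_insert (hnotMem A Q h.2)]

end SetPartition

theorem one_add_sum_pow_card_sub_one_eq_sum_partitionsOf {ι R : Type*} [DecidableEq ι]
    [Fintype ι] [CommRing R] [IsAddTorsionFree R] (x : ι → R) (S : Finset ι) :
    (1 + ∑ i ∈ S, x i) ^ (#S - 1) =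
      ∑ P ∈ partitionsOf S, ∏ B ∈ P, (∑ b ∈ B, x b) ^ (#B - 1) := by
  induction S using Finset.strongInduction with
  | H S ih =>
  rcases S.eq_empty_or_nonempty with rfl | ⟨s, hs⟩
  · simp [partitionsOf_empty]
  have hsT := notMem_erase s S
  have hblock : ∀ A ∈ (S.erase s).powerset,
      (∑ b ∈ insert s A, x b) ^ (#(insert s A) - 1) *
        ∑ Q ∈ partitionsOf (S.erase s \ A), ∏ B ∈ Q, (∑ b ∈ B, x b) ^ (#B - 1) =
      (x s + ∑ i ∈ A, x i) ^ #A * (1 + ∑ i ∈ S.erase s \ A, x i) ^ (#(S.erase s \ A) - 1) := by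
    intro A hA
    have hsA : s ∉ A := fun h => hsT (mem_powerset.mp hA h)
    rw [← ih _ (sdiff_subset.trans_ssubset (erase_ssubset hs)), sum_insert hsA,
      card_insert_of_notMem hsA, Nat.add_sub_cancel]
  rw [← insert_erase hs, sum_partitionsOf_insert _ hsT, sum_congr rfl hblock, ← hurwitzSum,
    hurwitzSum_eq, sum_insert hsT, card_insert_of_notMem hsT, Nat.add_sub_cancel, add_assoc]

theorem partition_power_identity_general (n : ℕ) :
    (1 + ∑ i : Fin n, X i : MvPolynomial (Fin n) ℚ) ^ (n - 1) =
      ∑ P ∈ partitionsOf (Finset.univ : Finset (Fin n)),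
        ∏ B ∈ P, (∑ b ∈ B, X b) ^ (B.card - 1) := by
  simpa using one_add_sum_pow_card_sub_one_eq_sum_partitionsOf (X (R := ℚ)) (univ : Finset (Fin n))

theorem partition_power_identity (n : ℕ) (hn : 0 < n) :
    (1 + ∑ i : Fin n, X i : MvPolynomial (Fin n) ℚ) ^ (n - 1) =
      ∑ P ∈ partitionsOf (Finset.univ : Finset (Fin n)),
        ∏ B ∈ P, (∑ b ∈ B, X b) ^ (B.card - 1) :=
  partition_power_identity_general n
end

section
/- For any natural number n, nonnegative integer r, and complex number x, the alternating sum over k from 0 to n of (-1)^k binom(n,k) binom(x+k, r+k) equals (-1)^n binom(x, r+n). -/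
/-!
With `f k = binom(x + k, r + k)`, Pascal's rule reads `Δ f k = binom(x + k, r + 1 + k)`, so the
`n`-th forward difference of `f` is `k ↦ binom(x + k, r + n + k)`. Expanding `Δ^n = (shift - 1)^n`
by the binomial theorem, the alternating sum on the left is `(-1)^n Δ^n f 0`. The argument works in
any binomial ring; on `ℂ`, `gchoose` is Mathlib's `Ring.choose`.
-/

open Finset

/-- The generalized binomial coefficient `binom(x, m) = x(x-1)⋯(x-m+1)/m!`
for a complex number `x` and a natural number `m`. -/
noncomputable def gchoose (x : ℂ) (m : ℕ) : ℂ :=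
  (∏ i ∈ Finset.range m, (x - i)) / m.factorial

open fwdDiff

theorem gchoose_eq_choose (x : ℂ) (m : ℕ) : gchoose x m = Ring.choose x m := by
  rw [gchoose, ← descPochhammer_eval_eq_prod_range, div_eq_iff (by simp [m.factorial_ne_zero]),
    ← nsmul_eq_mul', ← Ring.descPochhammer_eq_factorial_smul_choose, ← Polynomial.aeval_eq_smeval,
    Polynomial.aeval_def, Polynomial.eval₂_eq_eval_map, descPochhammer_map]

section

variable {R : Type*} [Ring R]

theorem sum_range_neg_one_pow_mul_choose_mul_eq_fwdDiff_iter (f : ℕ → R) (n : ℕ) :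
    ∑ k ∈ range (n + 1), (-1 : R) ^ k * n.choose k * f k = (-1) ^ n * (Δ_[1])^[n] f 0 := by
  rw [fwdDiff_iter_eq_sum_shift, mul_sum]
  refine sum_congr rfl fun k hk => ?_
  obtain ⟨j, rfl⟩ := Nat.exists_eq_add_of_le (mem_range_succ_iff.mp hk)
  have hsign : (-1 : R) ^ (k + j) * (-1) ^ j = (-1) ^ k := by
    rw [pow_add, mul_assoc, ← pow_add, Even.neg_one_pow ⟨j, rfl⟩, mul_one]
  simp only [zsmul_eq_mul, Nat.add_sub_cancel_left, zero_add, smul_eq_mul, mul_one]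
  push_cast
  rw [← mul_assoc, ← mul_assoc, hsign]

variable [BinomialRing R]

theorem fwdDiff_choose_add_natCast (x : R) (r : ℕ) :
    Δ_[1] (fun k : ℕ => Ring.choose (x + k) (r + k)) =
      fun k : ℕ => Ring.choose (x + k) (r + 1 + k) := by
  ext k
  rw [fwdDiff, Nat.cast_add_one, ← add_assoc, ← add_assoc, Ring.choose_succ_succ, add_right_comm r,
    add_sub_cancel_left]

theorem fwdDiff_iter_choose_add_natCast (x : R) (r n : ℕ) :
    (Δ_[1])^[n] (fun k : ℕ => Ring.choose (x + k) (r + k)) =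
      fun k : ℕ => Ring.choose (x + k) (r + n + k) := by
  induction n generalizing r with
  | zero => rfl
  | succ n ih =>
    rw [Function.iterate_succ_apply, fwdDiff_choose_add_natCast, ih, add_right_comm r,
      add_assoc r n 1]

theorem Ring.sum_range_neg_one_pow_mul_choose_mul_choose_add (x : R) (n r : ℕ) :
    ∑ k ∈ range (n + 1), (-1 : R) ^ k * n.choose k * Ring.choose (x + k) (r + k) =
      (-1) ^ n * Ring.choose x (r + n) := by
  rw [sum_range_neg_one_pow_mul_choose_mul_eq_fwdDiff_iter, fwdDiff_iter_choose_add_natCast]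
  simp only [Nat.cast_zero, add_zero]

end

theorem gould_10_18 (n r : ℕ) (x : ℂ) :
    ∑ k ∈ Finset.range (n + 1),
      (-1 : ℂ) ^ k * (n.choose k : ℂ) * gchoose (x + k) (r + k) =
      (-1 : ℂ) ^ n * gchoose x (r + n) := by
  simpa only [gchoose_eq_choose] using Ring.sum_range_neg_one_pow_mul_choose_mul_choose_add x n r
end

section
/- For any natural number k and complex numbers x, y such that y, y+1, ..., y+k are all nonzero, the sum over i from 0 to k of (-1)^i binom(k,i) binom(x-i, k) / (y+i) equals binom(x+y, k) / (y * binom(y+k, k)). -/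
/-!
The identity is a partial fraction decomposition in `y`. For a polynomial `f` of degree at most
`k`, Lagrange interpolation at the nodes `0, -1, …, -k` gives
`f(y) / ∏_{j ≤ k} (y + j) = ∑_{i ≤ k} w_i f(-i) / (y + i)` with
`w_i = 1 / ∏_{j ≠ i} (j - i) = (-1)^i C(k,i) / k!`.
Apply this to `f(t) = (x+t)(x+t-1)⋯(x+t-k+1) = k! binom(x+t, k)` and use
`∏_{j ≤ k} (y + j) = k! y binom(y+k, k)`.
-/

open Finset

open Polynomial Lagrange Nat

theorem prod_range_cast_sub_self {R : Type*} [CommRing R] (i : ℕ) :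
    ∏ j ∈ range i, ((j : R) - i) = (-1) ^ i * i ! := by
  calc ∏ j ∈ range i, ((j : R) - i) = ∏ j ∈ range i, -((i : R) - j) :=
        prod_congr rfl fun _ _ => (neg_sub _ _).symm
    _ = (-1) ^ i * i ! := by
        rw [prod_neg, card_range, ← descPochhammer_eval_eq_prod_range,
          descPochhammer_eval_eq_descFactorial, descFactorial_self]

theorem prod_erase_range_succ_cast_sub {R : Type*} [CommRing R] {n i : ℕ} (h : i ≤ n) :
    ∏ j ∈ (range (n + 1)).erase i, ((j : R) - i) = (-1) ^ i * i ! * (n - i)! := by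
  induction n, h using Nat.le_induction with
  | base =>
    rw [range_add_one, erase_insert notMem_range_self, prod_range_cast_sub_self, Nat.sub_self,
      factorial_zero, cast_one, mul_one]
  | succ n hin ih =>
    rw [range_add_one, erase_insert_of_ne (by omega), prod_insert (by simp), ih,
      Nat.succ_sub hin, factorial_succ]
    push_cast [Nat.cast_sub hin]
    ring

namespace Lagrange

variable {F ι : Type*} [Field F] [DecidableEq ι] {s : Finset ι} {v : ι → F}

theorem eval_div_eval_nodal_eq_sum {f : F[X]} (hvs : Set.InjOn v s) (hf : f.degree < #s)
    {x : F} (hx : ∀ i ∈ s, x ≠ v i) :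
    f.eval x / (nodal s v).eval x = ∑ i ∈ s, nodalWeight s v i * f.eval (v i) / (x - v i) := by
  have hfx := congrArg (eval x) (eq_interpolate hvs hf)
  rw [eval_interpolate_not_at_node _ hx] at hfx
  rw [hfx, mul_div_cancel_left₀ _ (eval_nodal_not_at_node hx)]
  exact sum_congr rfl fun i _ => by ring

theorem nodalWeight_range_succ_neg_cast {K : Type*} [Field K] [CharZero K] {n i : ℕ}
    (h : i ≤ n) :
    nodalWeight (range (n + 1)) (fun j : ℕ => -(j : K)) i = (-1) ^ i * n.choose i / n ! := by
  simp only [nodalWeight, neg_sub_neg, prod_inv_distrib]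
  rw [prod_erase_range_succ_cast_sub h, cast_choose K h]
  field_simp
  rw [← pow_mul, Even.neg_one_pow ⟨i, by ring⟩,
    mul_div_mul_right _ _ (cast_ne_zero.2 n.factorial_ne_zero)]

end Lagrange

theorem factorial_mul_gchoose (z : ℂ) (k : ℕ) :
    (k ! : ℂ) * gchoose z k = ∏ m ∈ range k, (z - m) :=
  mul_div_cancel₀ _ (cast_ne_zero.2 k.factorial_ne_zero)

theorem prod_range_succ_add_eq_mul_gchoose (y : ℂ) (k : ℕ) :
    ∏ j ∈ range (k + 1), (y + j) = y * (k ! * gchoose (y + k) k) := by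
  rw [factorial_mul_gchoose, prod_range_succ', ← prod_range_reflect (fun m : ℕ => y + k - m),
    cast_zero, add_zero, mul_comm]
  refine congrArg _ (prod_congr rfl fun j hj => ?_)
  rw [Nat.sub_sub, Nat.cast_sub (by simpa [add_comm] using hj)]
  push_cast
  ring

theorem gould_1_18 (k : ℕ) (x y : ℂ) (hy : ∀ i : ℕ, i ≤ k → y + i ≠ 0) :
    ∑ i ∈ Finset.range (k + 1),
      (-1 : ℂ) ^ i * (k.choose i : ℂ) * gchoose (x - i) k / (y + i) =
      gchoose (x + y) k / (y * gchoose (y + k) k) := by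
  set f : ℂ[X] := nodal (range k) (fun m : ℕ => (m : ℂ) - x)
  have hf (t : ℂ) : f.eval t = k ! * gchoose (x + t) k := by
    rw [factorial_mul_gchoose, eval_nodal]
    exact prod_congr rfl fun _ _ => by ring
  have hdeg : f.degree < #(range (k + 1)) := by
    rw [degree_nodal, card_range, card_range]
    exact_mod_cast k.lt_succ_self
  have hinj : Set.InjOn (fun j : ℕ => -(j : ℂ)) (range (k + 1)) :=
    fun _ _ _ _ h => by simpa using h
  have hnodes : ∀ i ∈ range (k + 1), y ≠ -(i : ℂ) :=
    fun i hi => eq_neg_iff_add_eq_zero.not.2 (hy i (mem_range_succ_iff.1 hi))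
  have hk : (k ! : ℂ) ≠ 0 := cast_ne_zero.2 k.factorial_ne_zero
  have hpf := eval_div_eval_nodal_eq_sum hinj hdeg hnodes
  simp only [hf, eval_nodal, sub_neg_eq_add, ← sub_eq_add_neg] at hpf
  rw [prod_range_succ_add_eq_mul_gchoose, mul_left_comm, mul_div_mul_left _ _ hk] at hpf
  rw [hpf]
  refine sum_congr rfl fun i hi => ?_
  rw [nodalWeight_range_succ_neg_cast (mem_range_succ_iff.1 hi)]
  field_simp
end

section
/- For complex numbers y, ȳ, w, w̄, set e_1 = w + w̄ and e_2 = y·w̄ + ȳ·w + w·w̄. Then for every positive integer n: sum_{k=0}^{n-1} binom(n,k) (y^k w^{n-k} + ȳ^k w̄^{n-k}) = sum over tuples (n_1,n_2,n_3,n_4) of nonnegative integers with n_1+n_2+n_3+2n_4 = n and n_3+n_4 ≥ 1, of (-1)^{n_4} · n · [prod_{k=1}^{n_3+n_4-1} (n_1+k)(n_2+k)] / (n_3! n_4! (n_3+n_4-1)!) · y^{n_1} ȳ^{n_2} e_1^{n_3} e_2^{n_4}. -/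
/-!
Put `a = y + w` and `b = ȳ + w̄`, so that `a + b = y + ȳ + e₁` and `a b = y ȳ + e₂`; the power sums
`aⁿ + bⁿ` then satisfy `p (n + 2) = (y + ȳ + e₁) p (n + 1) - (y ȳ + e₂) p n`. Consider the sum of
`c(q) y^n₁ ȳ^n₂ e₁^n₃ e₂^n₄` over all tuples `q` of weight `n₁ + n₂ + n₃ + 2 n₄ = n`, including those
with `n₃ = n₄ = 0`, whose coefficients are taken from `yⁿ + ȳⁿ`. Multiplication by `y, ȳ, e₁, y ȳ, e₂`
shifts the tuples, so this sum satisfies the same recurrence once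
`c(q) = c(q - ε₁) + c(q - ε₂) + c(q - ε₃) - c(q - ε₁ - ε₂) - c(q - ε₄)` in weight at least 2: for
`n₃ + n₄ ≥ 2` this is a polynomial identity over the common denominator `n₃! n₄! (n₃ + n₄ - 1)!`,
and the other cases are finitely many boundary checks. Both sequences start with `2, y + ȳ + e₁`,
and removing `yⁿ + ȳⁿ` from both sides gives the identity.
-/

open Finset Nat

lemma Nat.ascFactorial_succ_eq_mul (n k : ℕ) :
    n.ascFactorial (k + 1) = n * (n + 1).ascFactorial k :=
  ascFactorial_succ.trans (succ_ascFactorial n k).symm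

lemma Nat.ascFactorial_eq_prod_Icc (a t : ℕ) : (a + 1).ascFactorial t = ∏ k ∈ Icc 1 t, (a + k) := by
  induction t with
  | zero => simp
  | succ t ih => rw [prod_Icc_succ_top (by omega), ← ih, ascFactorial_succ]; ring

lemma sum_range_choose_mul_pow_mul_pow {R : Type*} [CommRing R] (x z : R) (n : ℕ) :
    ∑ k ∈ range n, (n.choose k : R) * (x ^ k * z ^ (n - k)) = (x + z) ^ n - x ^ n := by
  rw [add_pow, sum_range_succ]
  simp only [Nat.sub_self, pow_zero, mul_one, choose_self, Nat.cast_one, mul_comm,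
    add_sub_cancel_right]

lemma eq_pow_add_pow_of_recurrence {R : Type*} [CommRing R] {a b : R} {u : ℕ → R}
    (h₀ : u 0 = 2) (h₁ : u 1 = a + b)
    (h : ∀ n, u (n + 2) = (a + b) * u (n + 1) - a * b * u n) (n : ℕ) : u n = a ^ n + b ^ n := by
  induction n using Nat.twoStepInduction with
  | zero => rw [h₀]; norm_num
  | one => rw [h₁]; ring
  | more n ih₀ ih₁ => rw [h, ih₀, ih₁]; ring

namespace TupleDecomposition

abbrev Tuple := ℕ × ℕ × ℕ × ℕ

def weight (q : Tuple) : ℕ := q.1 + q.2.1 + q.2.2.1 + 2 * q.2.2.2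

lemma weight_add (q δ : Tuple) : weight (q + δ) = weight q + weight δ := by
  simp only [weight, Prod.fst_add, Prod.snd_add]; ring

def tuples (n : ℕ) : Finset Tuple :=
  (range (n + 1) ×ˢ range (n + 1) ×ˢ range (n + 1) ×ˢ range (n + 1)).filter (weight · = n)

lemma mem_tuples {n : ℕ} {q : Tuple} : q ∈ tuples n ↔ weight q = n := by
  rw [tuples, mem_filter]
  simp only [weight, mem_product, mem_range]; omega

lemma sum_tuples_add {M : Type*} [AddCommMonoid M] (n : ℕ) (δ : Tuple) (f : Tuple → Tuple → M) :
    ∑ q ∈ tuples n, f q (q + δ) = ∑ q ∈ tuples (n + weight δ) with δ ≤ q, f (q - δ) q := by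
  refine sum_nbij' (· + δ) (· - δ) ?_ ?_ ?_ ?_ ?_
  · intro q hq
    simp_all [mem_tuples, weight_add]
  · intro q hq
    rw [mem_filter, mem_tuples] at hq
    rw [mem_tuples]
    have := weight_add (q - δ) δ
    rw [tsub_add_cancel_of_le hq.2] at this
    omega
  · intro q _; simp
  · intro q hq
    exact tsub_add_cancel_of_le (mem_filter.1 hq).2
  · intro q _; simp

variable (K : Type*) [Field K]

def coeff : Tuple → K
  | (n₁, n₂, n₃, n₄) =>
    if n₃ + n₄ = 0 then (if n₂ = 0 then 1 else 0) + (if n₁ = 0 then 1 else 0)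
    else (-1) ^ n₄ * (n₁ + n₂ + n₃ + 2 * n₄ : ℕ) *
      ((n₁ + 1).ascFactorial (n₃ + n₄ - 1) * (n₂ + 1).ascFactorial (n₃ + n₄ - 1) : ℕ) /
      (n₃ ! * n₄ ! * (n₃ + n₄ - 1)! : ℕ)

def shiftedCoeff (δ q : Tuple) : K := if δ ≤ q then coeff K (q - δ) else 0

variable {K}

lemma shiftedCoeff_mk (a b c d n₁ n₂ n₃ n₄ : ℕ) :
    shiftedCoeff K (a, b, c, d) (n₁, n₂, n₃, n₄) =
      if a ≤ n₁ ∧ b ≤ n₂ ∧ c ≤ n₃ ∧ d ≤ n₄ then coeff K (n₁ - a, n₂ - b, n₃ - c, n₄ - d)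
      else 0 := by
  simp [shiftedCoeff]

lemma coeff_zero_zero (n₁ n₂ : ℕ) :
    coeff K (n₁, n₂, 0, 0) = (if n₂ = 0 then 1 else 0) + (if n₁ = 0 then 1 else 0) := rfl

lemma coeff_e₁ (n₁ n₂ : ℕ) : coeff K (n₁, n₂, 1, 0) = n₁ + n₂ + 1 := by
  simp [coeff]

lemma coeff_e₂ (n₁ n₂ : ℕ) : coeff K (n₁, n₂, 0, 1) = -(n₁ + n₂ + 2) := by
  simp [coeff]

lemma coeff_of_eq_succ {n₁ n₂ n₃ n₄ j : ℕ} (h : n₃ + n₄ = j + 1) :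
    coeff K (n₁, n₂, n₃, n₄) = (-1) ^ n₄ * (n₁ + n₂ + n₃ + 2 * n₄ : ℕ) *
      ((n₁ + 1).ascFactorial j * (n₂ + 1).ascFactorial j : ℕ) / (n₃ ! * n₄ ! * j ! : ℕ) := by
  simp [coeff, h]

lemma coeff_of_one_le (q : Tuple) (h : 1 ≤ q.2.2.1 + q.2.2.2) :
    coeff K q = (-1) ^ q.2.2.2 * (weight q : K) *
      (∏ k ∈ Icc 1 (q.2.2.1 + q.2.2.2 - 1), (((q.1 + k : ℕ) : K) * ((q.2.1 + k : ℕ) : K))) /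
      ((q.2.2.1)! * (q.2.2.2)! * (q.2.2.1 + q.2.2.2 - 1)! : K) := by
  obtain ⟨n₁, n₂, n₃, n₄⟩ := q
  rw [coeff_of_eq_succ (j := n₃ + n₄ - 1) (by simp only at h; omega), prod_mul_distrib,
    ← Nat.cast_prod, ← Nat.cast_prod, ← ascFactorial_eq_prod_Icc, ← ascFactorial_eq_prod_Icc]
  simp [weight]

section ShiftsOverCommonDenominator

variable [CharZero K] {n₁ n₂ n₃ n₄ j : ℕ} (h : n₃ + n₄ = j + 2)
include h

lemma coeff_of_add_eq_add_two : coeff K (n₁, n₂, n₃, n₄) =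
    (-1) ^ n₄ * (n₁ + n₂ + n₃ + 2 * n₄ : K) * ((n₁ + j + 1) * (n₁ + 1).ascFactorial j) *
      ((n₂ + j + 1) * (n₂ + 1).ascFactorial j) / (n₃ ! * n₄ ! * (j + 1)! : ℕ) := by
  rw [coeff_of_eq_succ (by omega), ascFactorial_succ, ascFactorial_succ]
  push_cast; ring

lemma shiftedCoeff_y : shiftedCoeff K (1, 0, 0, 0) (n₁, n₂, n₃, n₄) =
    (-1) ^ n₄ * (n₁ + n₂ + n₃ + 2 * n₄ - 1 : K) * (n₁ * (n₁ + 1).ascFactorial j) *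
      ((n₂ + j + 1) * (n₂ + 1).ascFactorial j) / (n₃ ! * n₄ ! * (j + 1)! : ℕ) := by
  rcases n₁ with _ | a
  · simp [shiftedCoeff_mk]
  simp only [shiftedCoeff_mk, le_add_iff_nonneg_left, zero_le, and_self, if_true,
    Nat.add_sub_cancel, Nat.sub_zero]
  rw [coeff_of_eq_succ (j := j + 1) (by omega), ascFactorial_succ_eq_mul, ascFactorial_succ]
  push_cast; ring

lemma shiftedCoeff_yb : shiftedCoeff K (0, 1, 0, 0) (n₁, n₂, n₃, n₄) =
    (-1) ^ n₄ * (n₁ + n₂ + n₃ + 2 * n₄ - 1 : K) * ((n₁ + j + 1) * (n₁ + 1).ascFactorial j) *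
      (n₂ * (n₂ + 1).ascFactorial j) / (n₃ ! * n₄ ! * (j + 1)! : ℕ) := by
  rcases n₂ with _ | b
  · simp [shiftedCoeff_mk]
  simp only [shiftedCoeff_mk, le_add_iff_nonneg_left, zero_le, and_self, if_true,
    Nat.add_sub_cancel, Nat.sub_zero]
  rw [coeff_of_eq_succ (j := j + 1) (by omega), ascFactorial_succ_eq_mul (b + 1),
    ascFactorial_succ (n := n₁ + 1)]
  push_cast; ring

lemma shiftedCoeff_y_yb : shiftedCoeff K (1, 1, 0, 0) (n₁, n₂, n₃, n₄) =
    (-1) ^ n₄ * (n₁ + n₂ + n₃ + 2 * n₄ - 2 : K) * (n₁ * (n₁ + 1).ascFactorial j) *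
      (n₂ * (n₂ + 1).ascFactorial j) / (n₃ ! * n₄ ! * (j + 1)! : ℕ) := by
  rcases n₁ with _ | a
  · simp [shiftedCoeff_mk]
  rcases n₂ with _ | b
  · simp [shiftedCoeff_mk]
  simp only [shiftedCoeff_mk, le_add_iff_nonneg_left, zero_le, and_self, if_true,
    Nat.add_sub_cancel, Nat.sub_zero]
  rw [coeff_of_eq_succ (j := j + 1) (by omega), ascFactorial_succ_eq_mul,
    ascFactorial_succ_eq_mul]
  push_cast; ring

lemma shiftedCoeff_e₁ : shiftedCoeff K (0, 0, 1, 0) (n₁, n₂, n₃, n₄) =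
    (-1) ^ n₄ * (n₁ + n₂ + n₃ + 2 * n₄ - 1 : K) * n₃ * (j + 1) *
      ((n₁ + 1).ascFactorial j * (n₂ + 1).ascFactorial j) / (n₃ ! * n₄ ! * (j + 1)! : ℕ) := by
  rcases n₃ with _ | c
  · simp [shiftedCoeff_mk]
  simp only [shiftedCoeff_mk, le_add_iff_nonneg_left, zero_le, and_self, if_true,
    Nat.add_sub_cancel, Nat.sub_zero]
  rw [coeff_of_eq_succ (j := j) (by omega), div_eq_div_iff (Nat.cast_ne_zero.2 (by positivity))
    (Nat.cast_ne_zero.2 (by positivity)), factorial_succ c, factorial_succ j]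
  push_cast; ring

lemma shiftedCoeff_e₂ : shiftedCoeff K (0, 0, 0, 1) (n₁, n₂, n₃, n₄) =
    -(-1) ^ n₄ * (n₁ + n₂ + n₃ + 2 * n₄ - 2 : K) * n₄ * (j + 1) *
      ((n₁ + 1).ascFactorial j * (n₂ + 1).ascFactorial j) / (n₃ ! * n₄ ! * (j + 1)! : ℕ) := by
  rcases n₄ with _ | d
  · simp [shiftedCoeff_mk]
  simp only [shiftedCoeff_mk, le_add_iff_nonneg_left, zero_le, and_self, if_true,
    Nat.add_sub_cancel, Nat.sub_zero]
  rw [coeff_of_eq_succ (j := j) (by omega), div_eq_div_iff (Nat.cast_ne_zero.2 (by positivity))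
    (Nat.cast_ne_zero.2 (by positivity)), factorial_succ d, factorial_succ j]
  push_cast; ring

lemma coeff_eq_sum_shiftedCoeff_of_add_eq_add_two :
    coeff K (n₁, n₂, n₃, n₄) = shiftedCoeff K (1, 0, 0, 0) (n₁, n₂, n₃, n₄) +
      shiftedCoeff K (0, 1, 0, 0) (n₁, n₂, n₃, n₄) + shiftedCoeff K (0, 0, 1, 0) (n₁, n₂, n₃, n₄) -
      shiftedCoeff K (1, 1, 0, 0) (n₁, n₂, n₃, n₄) - shiftedCoeff K (0, 0, 0, 1) (n₁, n₂, n₃, n₄) := by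
  rw [coeff_of_add_eq_add_two h, shiftedCoeff_y h, shiftedCoeff_yb h, shiftedCoeff_e₁ h,
    shiftedCoeff_y_yb h, shiftedCoeff_e₂ h, ← add_div, ← add_div, ← sub_div, ← sub_div]
  congr 1
  have hj : (j : K) = n₃ + n₄ - 2 := by
    rw [eq_sub_iff_add_eq]; exact_mod_cast h.symm
  rw [hj]; ring

end ShiftsOverCommonDenominator

lemma coeff_eq_sum_shiftedCoeff_of_add_le_one {n₁ n₂ n₃ n₄ : ℕ}
    (h : n₃ + n₄ ≤ 1) (hw : 2 ≤ weight (n₁, n₂, n₃, n₄)) :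
    coeff K (n₁, n₂, n₃, n₄) = shiftedCoeff K (1, 0, 0, 0) (n₁, n₂, n₃, n₄) +
      shiftedCoeff K (0, 1, 0, 0) (n₁, n₂, n₃, n₄) + shiftedCoeff K (0, 0, 1, 0) (n₁, n₂, n₃, n₄) -
      shiftedCoeff K (1, 1, 0, 0) (n₁, n₂, n₃, n₄) - shiftedCoeff K (0, 0, 0, 1) (n₁, n₂, n₃, n₄) := by
  simp only [weight] at hw
  obtain ⟨rfl, rfl⟩ | ⟨rfl, rfl⟩ | ⟨rfl, rfl⟩ :
      (n₃ = 0 ∧ n₄ = 0) ∨ (n₃ = 1 ∧ n₄ = 0) ∨ (n₃ = 0 ∧ n₄ = 1) := by omega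
  all_goals
    rcases n₁ with _ | _ | n₁ <;> rcases n₂ with _ | _ | n₂ <;>
      simp [shiftedCoeff_mk, coeff_zero_zero, coeff_e₁, coeff_e₂] at hw ⊢ <;> ring

lemma coeff_eq_sum_shiftedCoeff [CharZero K] (q : Tuple) (hq : 2 ≤ weight q) :
    coeff K q = shiftedCoeff K (1, 0, 0, 0) q + shiftedCoeff K (0, 1, 0, 0) q +
      shiftedCoeff K (0, 0, 1, 0) q - shiftedCoeff K (1, 1, 0, 0) q -
      shiftedCoeff K (0, 0, 0, 1) q := by
  obtain ⟨n₁, n₂, n₃, n₄⟩ := q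
  rcases le_or_gt 2 (n₃ + n₄) with h | h
  · exact coeff_eq_sum_shiftedCoeff_of_add_eq_add_two (j := n₃ + n₄ - 2) (by omega)
  · exact coeff_eq_sum_shiftedCoeff_of_add_le_one (by omega) hq

def tupleMonomial {R : Type*} [CommSemiring R] (y yb e₁ e₂ : R) (q : Tuple) : R :=
  y ^ q.1 * yb ^ q.2.1 * e₁ ^ q.2.2.1 * e₂ ^ q.2.2.2

lemma tupleMonomial_add {R : Type*} [CommSemiring R] (y yb e₁ e₂ : R) (q δ : Tuple) :
    tupleMonomial y yb e₁ e₂ (q + δ) = tupleMonomial y yb e₁ e₂ q * tupleMonomial y yb e₁ e₂ δ := by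
  simp only [tupleMonomial, Prod.fst_add, Prod.snd_add, pow_add]; ring

section Expansion

variable (y yb e₁ e₂ : K)

def expansion (n : ℕ) : K := ∑ q ∈ tuples n, coeff K q * tupleMonomial y yb e₁ e₂ q

lemma tupleMonomial_mul_expansion (n : ℕ) (δ : Tuple) :
    tupleMonomial y yb e₁ e₂ δ * expansion y yb e₁ e₂ n =
      ∑ q ∈ tuples (n + weight δ), shiftedCoeff K δ q * tupleMonomial y yb e₁ e₂ q := by
  calc tupleMonomial y yb e₁ e₂ δ * expansion y yb e₁ e₂ n
      = ∑ q ∈ tuples n, coeff K q * tupleMonomial y yb e₁ e₂ (q + δ) := by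
        rw [expansion, mul_sum]
        exact sum_congr rfl fun q _ ↦ by rw [tupleMonomial_add]; ring
    _ = ∑ q ∈ tuples (n + weight δ) with δ ≤ q, coeff K (q - δ) * tupleMonomial y yb e₁ e₂ q :=
        sum_tuples_add n δ fun p q ↦ coeff K p * tupleMonomial y yb e₁ e₂ q
    _ = _ := by simp only [sum_filter, shiftedCoeff, ite_mul, zero_mul]

lemma expansion_add_two [CharZero K] (n : ℕ) :
    expansion y yb e₁ e₂ (n + 2) = (y + yb + e₁) * expansion y yb e₁ e₂ (n + 1) -
      (y * yb + e₂) * expansion y yb e₁ e₂ n := by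
  have hs : y + yb + e₁ = tupleMonomial y yb e₁ e₂ (1, 0, 0, 0) +
      tupleMonomial y yb e₁ e₂ (0, 1, 0, 0) + tupleMonomial y yb e₁ e₂ (0, 0, 1, 0) := by
    simp [tupleMonomial]
  have hp : y * yb + e₂ = tupleMonomial y yb e₁ e₂ (1, 1, 0, 0) +
      tupleMonomial y yb e₁ e₂ (0, 0, 0, 1) := by
    simp [tupleMonomial]
  rw [hs, hp]
  simp only [add_mul, tupleMonomial_mul_expansion]
  simp only [expansion, weight, ← sum_add_distrib, ← sum_sub_distrib]
  refine sum_congr rfl fun q hq ↦ ?_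
  rw [coeff_eq_sum_shiftedCoeff q (by rw [mem_tuples.1 hq]; omega)]
  ring

lemma expansion_zero : expansion y yb e₁ e₂ 0 = 2 := by
  rw [expansion, show tuples 0 = {(0, 0, 0, 0)} by decide, sum_singleton]
  norm_num [coeff_zero_zero, tupleMonomial]

lemma expansion_one : expansion y yb e₁ e₂ 1 = y + yb + e₁ := by
  rw [expansion, show tuples 1 = {(1, 0, 0, 0), (0, 1, 0, 0), (0, 0, 1, 0)} by decide,
    sum_insert (by decide), sum_pair (by decide)]
  norm_num [coeff_zero_zero, coeff_e₁, tupleMonomial, add_assoc]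

theorem expansion_eq_pow_add_pow [CharZero K] {a b : K} (hs : a + b = y + yb + e₁)
    (hp : a * b = y * yb + e₂) (n : ℕ) : expansion y yb e₁ e₂ n = a ^ n + b ^ n :=
  eq_pow_add_pow_of_recurrence (expansion_zero y yb e₁ e₂) (by rw [expansion_one, hs])
    (fun n ↦ by rw [expansion_add_two, hs, hp]) n

lemma sum_tuples_filter_eq_zero (n : ℕ) :
    ∑ q ∈ tuples n with q.2.2.1 + q.2.2.2 = 0, coeff K q * tupleMonomial y yb e₁ e₂ q =
      y ^ n + yb ^ n := by
  have hfst : {q ∈ tuples n | q.2.2.1 + q.2.2.2 = 0 ∧ q.2.1 = 0} = {(n, 0, 0, 0)} := by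
    ext ⟨a, b, c, d⟩; simp [mem_tuples, weight]; omega
  have hsnd : {q ∈ tuples n | q.2.2.1 + q.2.2.2 = 0 ∧ q.1 = 0} = {(0, n, 0, 0)} := by
    ext ⟨a, b, c, d⟩; simp [mem_tuples, weight]; omega
  calc ∑ q ∈ tuples n with q.2.2.1 + q.2.2.2 = 0, coeff K q * tupleMonomial y yb e₁ e₂ q
      = ∑ q ∈ tuples n with q.2.2.1 + q.2.2.2 = 0,
          ((if q.2.1 = 0 then tupleMonomial y yb e₁ e₂ q else 0) +
            (if q.1 = 0 then tupleMonomial y yb e₁ e₂ q else 0)) := by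
        refine sum_congr rfl fun ⟨a, b, c, d⟩ hq ↦ ?_
        obtain ⟨rfl, rfl⟩ : c = 0 ∧ d = 0 := by
          have := (mem_filter.1 hq).2; simp only at this; omega
        simp only [coeff_zero_zero, add_mul, ite_mul, one_mul, zero_mul]
    _ = y ^ n + yb ^ n := by
        rw [sum_add_distrib, ← sum_filter, ← sum_filter, filter_filter, filter_filter, hfst, hsnd]
        simp [tupleMonomial]

end Expansion

theorem sum_tuples_filter_one_le [CharZero K] {y yb e₁ e₂ a b : K} (hs : a + b = y + yb + e₁)
    (hp : a * b = y * yb + e₂) (n : ℕ) :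
    ∑ q ∈ tuples n with 1 ≤ q.2.2.1 + q.2.2.2, coeff K q * tupleMonomial y yb e₁ e₂ q =
      a ^ n + b ^ n - (y ^ n + yb ^ n) := by
  rw [← expansion_eq_pow_add_pow y yb e₁ e₂ hs hp, ← sum_tuples_filter_eq_zero y yb e₁ e₂ n,
    eq_sub_iff_add_eq, expansion,
    ← sum_filter_add_sum_filter_not (tuples n) (fun q ↦ 1 ≤ q.2.2.1 + q.2.2.2)]
  simp only [not_le, Nat.lt_one_iff]

end TupleDecomposition

open TupleDecomposition in
theorem tuple_decomposition_general (n : ℕ) (y yb w wb : ℂ) :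
    ∑ k ∈ Finset.range n, (n.choose k : ℂ) *
        (y ^ k * w ^ (n - k) + yb ^ k * wb ^ (n - k)) =
      ∑ q ∈ (Finset.range (n + 1) ×ˢ Finset.range (n + 1) ×ˢ
            Finset.range (n + 1) ×ˢ Finset.range (n + 1)).filter
          (fun q => q.1 + q.2.1 + q.2.2.1 + 2 * q.2.2.2 = n ∧
            1 ≤ q.2.2.1 + q.2.2.2),
        (-1 : ℂ) ^ q.2.2.2 * (n : ℂ) *
          (∏ k ∈ Finset.Icc 1 (q.2.2.1 + q.2.2.2 - 1),
            (((q.1 + k : ℕ) : ℂ) * ((q.2.1 + k : ℕ) : ℂ))) /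
          ((q.2.2.1.factorial : ℂ) * (q.2.2.2.factorial : ℂ) *
            ((q.2.2.1 + q.2.2.2 - 1).factorial : ℂ)) *
          (y ^ q.1 * yb ^ q.2.1 * (w + wb) ^ q.2.2.1 *
            (y * wb + yb * w + w * wb) ^ q.2.2.2) := by
  have hRHS := sum_tuples_filter_one_le (y := y) (yb := yb) (e₁ := w + wb)
    (e₂ := y * wb + yb * w + w * wb) (a := y + w) (b := yb + wb) (by ring) (by ring) n
  rw [tuples, filter_filter] at hRHS
  simp only [mul_add, sum_add_distrib, sum_range_choose_mul_pow_mul_pow]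
  rw [sub_add_sub_comm, ← hRHS]
  refine sum_congr rfl fun q hq ↦ ?_
  obtain ⟨hw, hm⟩ := (mem_filter.1 hq).2
  rw [coeff_of_one_le q hm, tupleMonomial, weight, hw]

theorem tuple_decomposition (n : ℕ) (hn : 1 ≤ n) (y yb w wb : ℂ) :
    ∑ k ∈ Finset.range n, (n.choose k : ℂ) *
        (y ^ k * w ^ (n - k) + yb ^ k * wb ^ (n - k)) =
      ∑ q ∈ (Finset.range (n + 1) ×ˢ Finset.range (n + 1) ×ˢ
            Finset.range (n + 1) ×ˢ Finset.range (n + 1)).filter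
          (fun q => q.1 + q.2.1 + q.2.2.1 + 2 * q.2.2.2 = n ∧
            1 ≤ q.2.2.1 + q.2.2.2),
        (-1 : ℂ) ^ q.2.2.2 * (n : ℂ) *
          (∏ k ∈ Finset.Icc 1 (q.2.2.1 + q.2.2.2 - 1),
            (((q.1 + k : ℕ) : ℂ) * ((q.2.1 + k : ℕ) : ℂ))) /
          ((q.2.2.1.factorial : ℂ) * (q.2.2.2.factorial : ℂ) *
            ((q.2.2.1 + q.2.2.2 - 1).factorial : ℂ)) *
          (y ^ q.1 * yb ^ q.2.1 * (w + wb) ^ q.2.2.1 *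
            (y * wb + yb * w + w * wb) ^ q.2.2.2) :=
  tuple_decomposition_general n y yb w wb
end

section
/- For any r ≥ 1, the sum over all set partitions π ∈ P([r]) of {1,...,r} of a^{(|π|-1)}(x) · prod_{B∈π} b^{(|B|-1)}(y) equals (b(y)∂_x + ∂_y)^{r-1} applied to a(x)·b(y). -/
open MvPolynomial Finset

/-- The first-order differential operator `f ↦ b(y)·∂ₓf + ∂_y f` acting on
smooth functions of two real variables. -/
noncomputable def Lop (b : ℝ → ℝ) (F : ℝ → ℝ → ℝ) : ℝ → ℝ → ℝ :=
  fun x y => b y * deriv (fun x' => F x' y) x + deriv (F x) y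

set_option linter.unusedSectionVars false

namespace PartAux

variable {α : Type*} [Fintype α] [DecidableEq α]

lemma mem_partitionsOf {S : Finset α} {P : Finset (Finset α)} :
    P ∈ partitionsOf S ↔ IsSetPartition S P := by
  simp [partitionsOf]

/-- The block of `Q` containing `r` (junk if not unique). -/
def blk (r : α) (Q : Finset (Finset α)) : Finset α :=
  (Q.filter fun B => r ∈ B).sup id

lemma blk_spec {r : α} {S : Finset α} {Q : Finset (Finset α)}
    (hQ : IsSetPartition (insert r S) Q) :
    blk r Q ∈ Q ∧ r ∈ blk r Q := by
  obtain ⟨h1, h2, h3⟩ := hQ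
  have hrmem : r ∈ Q.sup id := h3 ▸ Finset.mem_insert_self r S
  rw [Finset.mem_sup] at hrmem
  obtain ⟨B, hBQ, hrB⟩ := hrmem
  have hfilter : Q.filter (fun B' => r ∈ B') = {B} := by
    ext B'
    simp only [Finset.mem_filter, Finset.mem_singleton]
    constructor
    · rintro ⟨hB'Q, hrB'⟩
      by_contra hne
      exact (Finset.disjoint_left.mp (h2 B' hB'Q B hBQ hne)) hrB' hrB
    · rintro rfl; exact ⟨hBQ, hrB⟩
  have : blk r Q = B := by rw [blk, hfilter, Finset.sup_singleton]; rfl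
  rw [this]; exact ⟨hBQ, hrB⟩

lemma not_mem_block {S : Finset α} {r : α} (hr : r ∉ S) {P : Finset (Finset α)}
    (hP : IsSetPartition S P) {B : Finset α} (hB : B ∈ P) : r ∉ B := by
  intro hrB
  exact hr (hP.2.2 ▸ (Finset.mem_sup.mpr ⟨B, hB, hrB⟩))

lemma empty_not_mem {S : Finset α} {P : Finset (Finset α)}
    (hP : IsSetPartition S P) : (∅ : Finset α) ∉ P := by
  intro h
  exact Finset.not_nonempty_empty (hP.1 _ h)

/-- Forward membership: the image of a partition of `insert r S`. -/
lemma fwd_mem {S : Finset α} {r : α} (hr : r ∉ S) {Q : Finset (Finset α)}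
    (hQ : IsSetPartition (insert r S) Q) :
    IsSetPartition S ((insert ((blk r Q).erase r) (Q.erase (blk r Q))).erase ∅) ∧
      ((blk r Q).erase r ∈
        insert ∅ ((insert ((blk r Q).erase r) (Q.erase (blk r Q))).erase ∅)) := by
  obtain ⟨hB₀Q, hrB₀⟩ := blk_spec hQ
  set B₀ := blk r Q with hB₀
  obtain ⟨h1, h2, h3⟩ := hQ
  set P₀ := (insert (B₀.erase r) (Q.erase B₀)).erase ∅ with hP₀
  have hmemP₀ : ∀ B ∈ P₀, B ≠ ∅ ∧ (B = B₀.erase r ∨ B ∈ Q.erase B₀) := by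
    intro B hB
    rw [hP₀, Finset.mem_erase, Finset.mem_insert] at hB
    exact hB
  have hrT : ∀ B ∈ Q.erase B₀, r ∉ B := by
    intro B hB hrB
    rw [Finset.mem_erase] at hB
    exact (Finset.disjoint_left.mp (h2 B hB.2 B₀ hB₀Q hB.1)) hrB hrB₀
  have hdisj : ∀ B ∈ Q.erase B₀, Disjoint (B₀.erase r) B := by
    intro B hB
    rw [Finset.mem_erase] at hB
    exact Disjoint.mono_left (Finset.erase_subset _ _)
      (h2 B₀ hB₀Q B hB.2 (Ne.symm hB.1))
  refine ⟨⟨?_, ?_, ?_⟩, ?_⟩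
  · intro B hB
    exact Finset.nonempty_iff_ne_empty.mpr (hmemP₀ B hB).1
  · intro B hB B' hB' hne
    obtain ⟨-, hB⟩ := hmemP₀ B hB
    obtain ⟨-, hB'⟩ := hmemP₀ B' hB'
    rcases hB with rfl | hB
    · rcases hB' with rfl | hB'
      · exact absurd rfl hne
      · exact hdisj _ hB'
    · rcases hB' with rfl | hB'
      · exact (hdisj _ hB).symm
      · rw [Finset.mem_erase] at hB hB'
        exact h2 B hB.2 B' hB'.2 hne
  · have hsup : P₀.sup id = (insert (B₀.erase r) (Q.erase B₀)).sup id :=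
      Finset.sup_erase_bot _
    rw [hsup, Finset.sup_insert]
    have hQsup : (B₀ : Finset α) ⊔ (Q.erase B₀).sup id = insert r S := by
      have h := congrArg (Finset.sup · id) (Finset.insert_erase hB₀Q)
      simp only [Finset.sup_insert, h3] at h
      simpa using h
    have hrT' : r ∉ (Q.erase B₀).sup id := by
      intro hrm
      rw [Finset.mem_sup] at hrm
      obtain ⟨B, hB, hrB⟩ := hrm
      exact hrT B hB hrB
    ext x
    simp only [Finset.sup_eq_union, Finset.mem_union, Finset.mem_erase, id] at hQsup ⊢
    have hx : x ∈ B₀ ∨ x ∈ (Q.erase B₀).sup id ↔ x ∈ insert r S := by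
      constructor
      · intro h; rw [← hQsup]; simpa using h
      · intro h; rw [← hQsup] at h; simpa using h
    simp only [Finset.mem_insert] at hx
    constructor
    · rintro (⟨hxr, hxB⟩ | hxT)
      · rcases hx.mp (Or.inl hxB) with rfl | h
        · exact absurd rfl hxr
        · exact h
      · rcases hx.mp (Or.inr hxT) with rfl | h
        · exact absurd hxT hrT'
        · exact h
    · intro hxS
      have hxr : x ≠ r := fun h => hr (h ▸ hxS)
      rcases hx.mpr (Or.inr hxS) with h | h
      · exact Or.inl ⟨hxr, h⟩
      · exact Or.inr h
  · by_cases hc : B₀.erase r = ∅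
    · rw [hc]; exact Finset.mem_insert_self _ _
    · refine Finset.mem_insert_of_mem ?_
      rw [hP₀, Finset.mem_erase]
      exact ⟨hc, Finset.mem_insert_self _ _⟩

/-- Backward membership. -/
lemma bwd_mem {S : Finset α} {r : α} (hr : r ∉ S) {P : Finset (Finset α)}
    (hP : IsSetPartition S P) {B : Finset α} (hB : B ∈ insert ∅ P) :
    IsSetPartition (insert r S) (insert (insert r B) (P.erase B)) := by
  obtain ⟨h1, h2, h3⟩ := hP
  have hBS : B ⊆ S := by
    rcases Finset.mem_insert.mp hB with rfl | hBP
    · exact Finset.empty_subset S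
    · exact h3 ▸ Finset.le_sup (f := id) hBP
  have hrB : r ∉ B := fun h => hr (hBS h)
  have hrnot : ∀ B' ∈ P.erase B, r ∉ B' := by
    intro B' hB' 
    exact not_mem_block hr ⟨h1, h2, h3⟩ (Finset.mem_of_mem_erase hB')
  have hdisjB : ∀ B' ∈ P.erase B, Disjoint (insert r B) B' := by
    intro B' hB'
    rw [Finset.disjoint_left]
    intro x hx hxB'
    rcases Finset.mem_insert.mp hx with rfl | hxB
    · exact hrnot B' hB' hxB'
    · rw [Finset.mem_erase] at hB'
      rcases Finset.mem_insert.mp hB with rfl | hBP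
      · exact absurd hxB (Finset.notMem_empty x)
      · exact (Finset.disjoint_left.mp (h2 B hBP B' hB'.2 (Ne.symm hB'.1))) hxB hxB'
  refine ⟨?_, ?_, ?_⟩
  · intro B' hB'
    rcases Finset.mem_insert.mp hB' with rfl | hB'
    · exact ⟨r, Finset.mem_insert_self r B⟩
    · exact h1 _ (Finset.mem_of_mem_erase hB')
  · intro C hC C' hC' hne
    rcases Finset.mem_insert.mp hC with rfl | hC
    · rcases Finset.mem_insert.mp hC' with rfl | hC'
      · exact absurd rfl hne
      · exact hdisjB _ hC'
    · rcases Finset.mem_insert.mp hC' with rfl | hC'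
      · exact (hdisjB _ hC).symm
      · rw [Finset.mem_erase] at hC hC'
        exact h2 _ hC.2 _ hC'.2 hne
  · rw [Finset.sup_insert]
    rcases Finset.mem_insert.mp hB with rfl | hBP
    · rw [Finset.erase_eq_of_notMem (empty_not_mem ⟨h1, h2, h3⟩), h3]
      simp [Finset.insert_eq, -Finset.singleton_union]
    · have h := congrArg (Finset.sup · id) (Finset.insert_erase hBP)
      simp only [Finset.sup_insert, h3] at h
      simp only [Finset.sup_eq_union, id_eq] at h ⊢
      rw [Finset.insert_union, h]

lemma erase_blk_not_mem {S : Finset α} {r : α} {Q : Finset (Finset α)}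
    (hQ : IsSetPartition (insert r S) Q) :
    (blk r Q).erase r ∉ Q.erase (blk r Q) := by
  obtain ⟨hB₀Q, hrB₀⟩ := blk_spec hQ
  obtain ⟨h1, h2, h3⟩ := hQ
  intro hmem
  rw [Finset.mem_erase] at hmem
  have hne := h1 _ hmem.2
  have hdisj := h2 _ hmem.2 _ hB₀Q hmem.1
  obtain ⟨x, hx⟩ := hne
  exact (Finset.disjoint_left.mp hdisj) hx (Finset.mem_of_mem_erase hx)

lemma sum_partitionsOf_insert {S : Finset α} {r : α} (hr : r ∉ S)
    (f : Finset (Finset α) → ℝ) :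
    ∑ Q ∈ partitionsOf (insert r S), f Q =
      ∑ P ∈ partitionsOf S, ∑ B ∈ insert ∅ P,
        f (insert (insert r B) (P.erase B)) := by
  have left_inv : ∀ Q ∈ partitionsOf (insert r S),
      (insert (insert r ((blk r Q).erase r))
        (((insert ((blk r Q).erase r) (Q.erase (blk r Q))).erase ∅).erase
          ((blk r Q).erase r))) = Q := by
    intro Q hQ
    rw [mem_partitionsOf] at hQ
    obtain ⟨hB₀Q, hrB₀⟩ := blk_spec hQ
    have hc : (blk r Q).erase r ∉ Q.erase (blk r Q) := erase_blk_not_mem hQ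
    have hnoempty : (∅ : Finset α) ∉ Q.erase (blk r Q) := fun h =>
      empty_not_mem hQ (Finset.mem_of_mem_erase h)
    rw [Finset.erase_right_comm, Finset.erase_insert hc,
      Finset.erase_eq_of_notMem hnoempty, Finset.insert_erase hrB₀,
      Finset.insert_erase hB₀Q]
  have step1 : ∑ Q ∈ partitionsOf (insert r S), f Q =
      ∑ p ∈ (partitionsOf S).sigma (fun P => insert ∅ P),
        f (insert (insert r p.2) (p.1.erase p.2)) := by
    refine Finset.sum_nbij'
      (i := fun Q => ⟨(insert ((blk r Q).erase r) (Q.erase (blk r Q))).erase ∅,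
        (blk r Q).erase r⟩)
      (j := fun p => insert (insert r p.2) (p.1.erase p.2)) ?_ ?_ left_inv ?_ ?_
    · intro Q hQ
      rw [mem_partitionsOf] at hQ
      obtain ⟨h1, h2⟩ := fwd_mem hr hQ
      rw [Finset.mem_sigma, mem_partitionsOf]
      exact ⟨h1, h2⟩
    · intro p hp
      rw [Finset.mem_sigma, mem_partitionsOf] at hp
      rw [mem_partitionsOf]
      exact bwd_mem hr hp.1 hp.2
    · rintro ⟨P, B⟩ hp
      rw [Finset.mem_sigma, mem_partitionsOf] at hp
      obtain ⟨hP, hB⟩ := hp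
      have hQpart := bwd_mem hr hP hB
      have hBS : B ⊆ S := by
        rcases Finset.mem_insert.mp hB with rfl | hBP
        · exact Finset.empty_subset S
        · exact hP.2.2 ▸ Finset.le_sup (f := id) hBP
      have hrB : r ∉ B := fun h => hr (hBS h)
      have hirB : insert r B ∉ P.erase B := fun h =>
        not_mem_block hr hP (Finset.mem_of_mem_erase h) (Finset.mem_insert_self r B)
      have hblk : blk r (insert (insert r B) (P.erase B)) = insert r B := by
        obtain ⟨hmem, hrmem⟩ := blk_spec hQpart
        rcases Finset.mem_insert.mp hmem with h | h
        · exact h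
        · exact absurd hrmem (not_mem_block hr hP (Finset.mem_of_mem_erase h))
      have hQe : (insert (insert r B) (P.erase B)).erase (insert r B) = P.erase B :=
        Finset.erase_insert hirB
      have hBe : (insert r B).erase r = B := Finset.erase_insert hrB
      have hPcomp : (insert B (P.erase B)).erase ∅ = P := by
        rcases Finset.mem_insert.mp hB with rfl | hBP
        · rw [Finset.erase_eq_of_notMem (empty_not_mem hP),
            Finset.erase_insert (empty_not_mem hP)]
        · rw [Finset.insert_erase hBP, Finset.erase_eq_of_notMem (empty_not_mem hP)]
      simp only [hblk, hBe, hQe, hPcomp]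
    · intro Q hQ
      exact (congrArg f (left_inv Q hQ)).symm
  rw [step1, Finset.sum_sigma]


lemma partitionsOf_singleton (a0 : α) :
    partitionsOf ({a0} : Finset α) = {{{a0}}} := by
  ext P
  rw [mem_partitionsOf, Finset.mem_singleton]
  constructor
  · rintro ⟨h1, h2, h3⟩
    have hsub : P ⊆ {{a0}} := by
      intro B hB
      have hBs : B ⊆ {a0} := h3 ▸ Finset.le_sup (f := id) hB
      rw [Finset.mem_singleton]
      rcases Finset.subset_singleton_iff.mp hBs with rfl | h
      · exact absurd (h1 _ hB) (by simp)
      · exact h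
    rcases Finset.subset_singleton_iff.mp hsub with rfl | h
    · exfalso
      simp only [Finset.sup_empty] at h3
      exact absurd h3.symm (Finset.singleton_ne_empty a0)
    · exact h
  · rintro rfl
    refine ⟨by simp, by simp, by simp⟩

lemma hasDerivAt_iteratedDeriv {g : ℝ → ℝ} (h : ContDiff ℝ (⊤ : ℕ∞) g) (n : ℕ) (x : ℝ) :
    HasDerivAt (iteratedDeriv n g) (iteratedDeriv (n + 1) g x) x := by
  rw [iteratedDeriv_succ]
  exact ((h.differentiable_iteratedDeriv n (by exact_mod_cast ENat.coe_lt_top n)) x).hasDerivAt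

lemma main_sum (a b : ℝ → ℝ) (ha : ContDiff ℝ (⊤ : ℕ∞) a) (hb : ContDiff ℝ (⊤ : ℕ∞) b)
    {S : Finset α} (hS : S.Nonempty) : ∀ x y : ℝ,
    ∑ P ∈ partitionsOf S,
      iteratedDeriv (P.card - 1) a x * ∏ B ∈ P, iteratedDeriv (B.card - 1) b y =
      (Lop b)^[S.card - 1] (fun x y => a x * b y) x y := by
  induction hS using Finset.Nonempty.cons_induction with
  | singleton a0 =>
    intro x y
    rw [partitionsOf_singleton]
    simp [iteratedDeriv_zero]
  | cons r S hr hS IH =>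
    intro x y
    have hScard : S.card - 1 + 1 = S.card := Nat.succ_pred_eq_of_pos (Finset.card_pos.mpr hS)
    rw [Finset.cons_eq_insert, sum_partitionsOf_insert hr]
    have hcard : (insert r S).card - 1 = S.card := by
      rw [Finset.card_insert_of_notMem hr]
      omega
    rw [hcard, ← hScard, Function.iterate_succ_apply']
    have hfun : (Lop b)^[S.card - 1] (fun x y => a x * b y) =
        fun x y => ∑ P ∈ partitionsOf S,
          iteratedDeriv (P.card - 1) a x * ∏ B ∈ P, iteratedDeriv (B.card - 1) b y := by
      funext x' y'
      exact (IH x' y').symm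
    rw [hfun]
    have hx : HasDerivAt (fun x' => ∑ P ∈ partitionsOf S,
        iteratedDeriv (P.card - 1) a x' * ∏ B ∈ P, iteratedDeriv (B.card - 1) b y)
        (∑ P ∈ partitionsOf S,
          iteratedDeriv (P.card - 1 + 1) a x * ∏ B ∈ P, iteratedDeriv (B.card - 1) b y) x :=
      HasDerivAt.fun_sum fun P _ => (hasDerivAt_iteratedDeriv ha _ x).mul_const _
    have hy : HasDerivAt (fun y' => ∑ P ∈ partitionsOf S,
        iteratedDeriv (P.card - 1) a x * ∏ B ∈ P, iteratedDeriv (B.card - 1) b y')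
        (∑ P ∈ partitionsOf S, iteratedDeriv (P.card - 1) a x *
          ∑ B ∈ P, (∏ B' ∈ P.erase B, iteratedDeriv (B'.card - 1) b y) •
            iteratedDeriv (B.card - 1 + 1) b y) y :=
      HasDerivAt.fun_sum fun P _ =>
        HasDerivAt.const_mul _
          (HasDerivAt.fun_finsetProd fun B _ => hasDerivAt_iteratedDeriv hb _ y)
    simp only [Lop]
    rw [hx.deriv, hy.deriv]
    rw [Finset.mul_sum, ← Finset.sum_add_distrib]
    refine Finset.sum_congr rfl fun P hP => ?_
    have hPpart := mem_partitionsOf.mp hP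
    have hPn : P.Nonempty := by
      rcases Finset.eq_empty_or_nonempty P with rfl | h
      · exfalso
        have h3 := hPpart.2.2
        simp only [Finset.sup_empty, Finset.bot_eq_empty] at h3
        exact hS.ne_empty h3.symm
      · exact h
    have hPcard : P.card - 1 + 1 = P.card := Nat.succ_pred_eq_of_pos (Finset.card_pos.mpr hPn)
    have h0 : (∅ : Finset α) ∉ P := empty_not_mem hPpart
    have hrP : {r} ∉ P := fun h => not_mem_block hr hPpart h (Finset.mem_singleton_self r)
    rw [Finset.sum_insert h0]
    have hins : insert r (∅ : Finset α) = {r} := rfl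
    have hfirst : iteratedDeriv ((insert (insert r ∅) (P.erase ∅)).card - 1) a x *
        ∏ B ∈ insert (insert r ∅) (P.erase ∅), iteratedDeriv (B.card - 1) b y
        = b y * (iteratedDeriv (P.card - 1 + 1) a x *
            ∏ B ∈ P, iteratedDeriv (B.card - 1) b y) := by
      rw [Finset.erase_eq_of_notMem h0, hins, Finset.card_insert_of_notMem hrP,
        Finset.prod_insert hrP, Nat.add_sub_cancel, hPcard]
      simp only [Finset.card_singleton, Nat.sub_self, iteratedDeriv_zero]
      ring
    have hsecond : ∑ B ∈ P, iteratedDeriv ((insert (insert r B) (P.erase B)).card - 1) a x *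
        ∏ B' ∈ insert (insert r B) (P.erase B), iteratedDeriv (B'.card - 1) b y
        = iteratedDeriv (P.card - 1) a x *
          ∑ B ∈ P, (∏ B' ∈ P.erase B, iteratedDeriv (B'.card - 1) b y) •
            iteratedDeriv (B.card - 1 + 1) b y := by
      rw [Finset.mul_sum]
      refine Finset.sum_congr rfl fun B hB => ?_
      have hrB : r ∉ B := not_mem_block hr hPpart hB
      have hirB : insert r B ∉ P.erase B := fun h =>
        not_mem_block hr hPpart (Finset.mem_of_mem_erase h) (Finset.mem_insert_self r B)
      have hBcard : B.card - 1 + 1 = B.card :=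
        Nat.succ_pred_eq_of_pos (Finset.card_pos.mpr (hPpart.1 B hB))
      rw [Finset.card_insert_of_notMem hirB, Finset.prod_insert hirB,
        Finset.card_erase_of_mem hB, Nat.add_sub_cancel,
        Finset.card_insert_of_notMem hrB, Nat.add_sub_cancel, hBcard, smul_eq_mul]
      ring
    rw [hfirst, hsecond]

end PartAux

open PartAux in
/- The inductive identity in the proof of Theorem A.6 of the paper: for `r ≥ 1`
and smooth `a, b`,
`∑_{π ∈ P([r])} a^{(|π|-1)}(x) ∏_{B∈π} b^{(|B|-1)}(y)
   = (b(y)∂ₓ + ∂_y)^{r-1} (a(x)·b(y))`. -/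
theorem partition_sum_eq_operator_power (r : ℕ) (hr : 1 ≤ r)
    (a b : ℝ → ℝ) (ha : ContDiff ℝ (⊤ : ℕ∞) a) (hb : ContDiff ℝ (⊤ : ℕ∞) b) (x y : ℝ) :
    ∑ P ∈ partitionsOf (Finset.univ : Finset (Fin r)),
      iteratedDeriv (P.card - 1) a x *
        ∏ B ∈ P, iteratedDeriv (B.card - 1) b y =
      (Lop b)^[r - 1] (fun x y => a x * b y) x y := by
  have : Nonempty (Fin r) := ⟨⟨0, hr⟩⟩
  have h := main_sum a b ha hb (S := (Finset.univ : Finset (Fin r))) Finset.univ_nonempty x y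
  rwa [Finset.card_univ, Fintype.card_fin] at h
end
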